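/- arXiv:1810.02654 — 10 statements merged into one kernel-verified Lean document; each statement's English description precedes it below -/
import Mathlib

section
/- Let G be a residually finite group, let H be a finitely generated virtually abelian subgroup of G which is a virtual retract of G, and let A be a subgroup of G containing H with finite index |A : H| < ∞. Then A is a virtual retract of G. -/
/-- `H` is a virtual retract of `G`: there are a finite-index subgroup `K` of `G` containing `H`
and a homomorphism `ρ : K → G` with image inside `H` restricting to the identity on `H`. -/
def IsVirtualRetract {G : Type*} [Group G] (H : Subgroup G) : Prop :=
  ∃ (K : Subgroup G) (hHK : H ≤ K), K.FiniteIndex ∧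
    ∃ ρ : ↥K →* G, (∀ k : ↥K, ρ k ∈ H) ∧ ∀ (h : G) (hh : h ∈ H), ρ ⟨h, hHK hh⟩ = h

/-- A group is residually finite if every non-identity element avoids some
finite-index normal subgroup. -/
def ResiduallyFinite (G : Type*) [Group G] : Prop :=
  ∀ g : G, g ≠ 1 → ∃ N : Subgroup G, N.Normal ∧ N.FiniteIndex ∧ g ∉ N

/-- A group is virtually abelian if it has an abelian subgroup of finite index. -/
def VirtuallyAbelian (G : Type*) [Group G] : Prop :=
  ∃ B : Subgroup G, B.FiniteIndex ∧ ∀ x y : ↥B, x * y = y * x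


/-!
Passing to a finite-index abelian subgroup of `H`, we may assume `H` abelian, with a retraction
`ρ : K → H` defined on a finite-index subgroup `K`. On the normal core `L` of `K`, the map
`κ x = (a (A ∩ H) ↦ ρ (a⁻¹ x a))` is a homomorphism (well defined because `H` is abelian) into the
finitely generated abelian group `M = H ^ (A / (A ∩ H))`. It is injective on `H ∩ L`, and it
intertwines conjugation by `A` with the action of `A` permuting the coordinates, which factors
through a finite group. Averaging over that finite group (a Maschke-type argument over `ℤ`) gives
an invariant `C ≤ M` meeting `U = κ (A ∩ L)` in a finite group and with `U C` of finite index.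
Then `N = κ⁻¹ C` is normalized by `A`, meets `A` in a finite group, and `A N` has finite index.
Residual finiteness shrinks `N` to meet `A` trivially, and then `A N / N ≅ A` is the retraction.
-/

section CommGroup

variable {M : Type*} [CommGroup M] [Group.FG M]

theorem Subgroup.fg_of_commGroup (S : Subgroup M) : S.FG := by
  rw [Subgroup.fg_iff_add_fg]
  exact (Submodule.fg_iff_addSubgroup_fg S.toAddSubgroup.toIntSubmodule).1
    (IsNoetherian.noetherian _)

theorem CommGroup.finite_of_pow_eq_one {n : ℕ} (hn : n ≠ 0) (h : ∀ x : M, x ^ n = 1) :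
    Finite M :=
  CommGroup.finite_of_fg_isMulTorsion M fun x ↦
    isOfFinOrder_iff_pow_eq_one.2 ⟨n, Nat.pos_of_ne_zero hn, h x⟩

/-- `p` projects onto the saturation of `U`, the preimage of the torsion `T` of `M / U`, which is a
direct summand because `(M / U) / T` is free; the exponent of the finite group `T` then carries the
saturation into `U`. -/
theorem Subgroup.exists_pow_retraction (U : Subgroup M) :
    ∃ n : ℕ, n ≠ 0 ∧ ∃ π : M →* M, (∀ x, π x ∈ U) ∧ ∀ u ∈ U, π u = u ^ n := by
  let V := U.toAddSubgroup.toIntSubmodule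
  let T := Submodule.torsion ℤ (Additive M ⧸ V)
  let q := T.mkQ ∘ₗ V.mkQ
  obtain ⟨s, hs⟩ := Module.projective_lifting_property q LinearMap.id
    (T.mkQ_surjective.comp V.mkQ_surjective)
  have : Finite T := Module.finite_of_fg_torsion _ Submodule.torsion_isTorsion
  let p := LinearMap.id - s ∘ₗ q
  have hq (x : Additive M) : q (p x) = 0 := by
    simp [p, ← LinearMap.comp_apply q s, hs]
  have hpV (x : Additive M) : AddMonoid.exponent T • p x ∈ V := by
    have hT : V.mkQ (p x) ∈ T := (Submodule.Quotient.mk_eq_zero T).1 (hq x)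
    rw [← Submodule.Quotient.mk_eq_zero V, Submodule.Quotient.mk_smul]
    exact congrArg Subtype.val (AddMonoid.exponent_nsmul_eq_zero (⟨_, hT⟩ : T))
  have hp (v : Additive M) (hv : v ∈ V) : p v = v := by
    have : q v = 0 := by simp [q, (Submodule.Quotient.mk_eq_zero V).2 hv]
    simp [p, this]
  refine ⟨AddMonoid.exponent T, AddMonoid.exponent_ne_zero_of_finite,
    MonoidHom.toAdditive.symm (AddMonoid.exponent T • p.toAddMonoidHom), hpV, fun u hu ↦ ?_⟩
  change (AddMonoid.exponent T • p (Additive.ofMul u)).toMul = u ^ AddMonoid.exponent T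
  rw [hp (Additive.ofMul u) hu]
  rfl

variable {Γ : Type*} [Group Γ] [Finite Γ] [MulDistribMulAction Γ M]

theorem Subgroup.exists_equivariant_pow_retraction (U : Subgroup M)
    (hU : ∀ g : Γ, ∀ u ∈ U, g • u ∈ U) :
    ∃ n : ℕ, n ≠ 0 ∧ ∃ φ : M →* M, (∀ (g : Γ) x, φ (g • x) = g • φ x) ∧ (∀ x, φ x ∈ U) ∧
      ∀ u ∈ U, φ u = u ^ n := by
  have := Fintype.ofFinite Γ
  obtain ⟨n, hn, π, hπU, hπ⟩ := U.exists_pow_retraction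
  let act (g : Γ) : M →* M := MulDistribMulAction.toMonoidHom M g
  have hφ (x : M) :
      (∏ g : Γ, (act g).comp (π.comp (act g⁻¹))) x = ∏ g : Γ, g • π (g⁻¹ • x) := by
    simp [act]
  refine ⟨Fintype.card Γ * n, mul_ne_zero Fintype.card_ne_zero hn,
    ∏ g : Γ, (act g).comp (π.comp (act g⁻¹)), fun g x ↦ ?_, fun x ↦ ?_, fun u hu ↦ ?_⟩
  · rw [hφ, hφ, Finset.smul_prod']
    exact Fintype.prod_equiv (Equiv.mulLeft g⁻¹) _ _ fun h ↦ by simp [mul_smul]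
  · rw [hφ]
    exact U.prod_mem fun g _ ↦ hU g _ (hπU _)
  · rw [hφ, mul_comm, pow_mul, ← Finset.card_univ, ← Finset.prod_const]
    exact Finset.prod_congr rfl fun g _ ↦ by
      rw [hπ _ (hU _ _ hu), smul_pow', smul_inv_smul]

theorem Subgroup.exists_invariant_finite_inf_finiteIndex_sup (U : Subgroup M)
    (hU : ∀ g : Γ, ∀ u ∈ U, g • u ∈ U) :
    ∃ C : Subgroup M, (∀ g : Γ, ∀ x ∈ C, g • x ∈ C) ∧ Finite ↥(U ⊓ C) ∧ (U ⊔ C).FiniteIndex := by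
  obtain ⟨n, hn, φ, hφ_smul, hφU, hφ⟩ := U.exists_equivariant_pow_retraction hU
  refine ⟨φ.ker, fun g x hx ↦ ?_, ?_, ?_⟩
  · rw [MonoidHom.mem_ker, hφ_smul, hx, smul_one]
  · have := (Group.fg_iff_subgroup_fg (U ⊓ φ.ker)).2 (Subgroup.fg_of_commGroup _)
    refine CommGroup.finite_of_pow_eq_one hn fun ⟨x, hxU, hxφ⟩ ↦ Subtype.ext ?_
    rw [Subgroup.coe_pow, ← hφ x hxU]
    exact hxφ
  · rw [Subgroup.finiteIndex_iff_finite_quotient]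
    refine CommGroup.finite_of_pow_eq_one hn fun q ↦ ?_
    induction q using QuotientGroup.induction_on with | H x => ?_
    rw [← QuotientGroup.mk_pow, QuotientGroup.eq_one_iff]
    have hker : x ^ n / φ x ∈ φ.ker := by
      rw [MonoidHom.mem_ker, map_div, map_pow, hφ _ (hφU x), div_self']
    simpa using Subgroup.mul_mem_sup (hφU x) hker

end CommGroup

section Group

variable {G : Type*} [Group G]

theorem isVirtualRetract_iff {H : Subgroup G} : IsVirtualRetract H ↔
    ∃ (K : Subgroup G) (hHK : H ≤ K), K.FiniteIndex ∧
      ∃ ρ : K →* H, ρ.comp (Subgroup.inclusion hHK) = MonoidHom.id H := by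
  constructor
  · rintro ⟨K, hHK, hK, ρ, hρH, hρ⟩
    exact ⟨K, hHK, hK, ρ.codRestrict H hρH, MonoidHom.ext fun h ↦ Subtype.ext (hρ h h.2)⟩
  · rintro ⟨K, hHK, hK, ρ, hρ⟩
    exact ⟨K, hHK, hK, H.subtype.comp ρ, fun k ↦ (ρ k).2,
      fun h hh ↦ congrArg Subtype.val (DFunLike.congr_fun hρ (⟨h, hh⟩ : H))⟩

theorem IsVirtualRetract.of_le_of_relIndex_ne_zero {H B : Subgroup G} (hH : IsVirtualRetract H)
    (hBH : B ≤ H) (hidx : B.relIndex H ≠ 0) : IsVirtualRetract B := by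
  obtain ⟨K, hHK, hK, ρ, hρH, hρ⟩ := hH
  let K' := (B.comap ρ).map K.subtype
  have hK'K : K' ≤ K := Subgroup.map_subtype_le _
  have hBK' : B ≤ K' := fun b hb ↦ ⟨⟨b, hHK (hBH hb)⟩, by simpa [hρ b (hBH hb)] using hb, rfl⟩
  have hK' : K'.FiniteIndex := by
    rw [Subgroup.finiteIndex_iff, Subgroup.index_map_subtype, Subgroup.index_comap]
    refine mul_ne_zero (fun h ↦ hidx (Subgroup.relIndex_eq_zero_of_le_right ?_ h))
      hK.index_ne_zero
    rintro _ ⟨k, rfl⟩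
    exact hρH k
  refine ⟨K', hBK', hK', ρ.comp (Subgroup.inclusion hK'K), ?_, fun b hb ↦ hρ b (hBH hb)⟩
  rintro ⟨_, k, hk, rfl⟩
  exact hk

theorem isVirtualRetract_of_le_normalizer {A N : Subgroup G} (hA : A ≤ Subgroup.normalizer N)
    (hAN : A ⊓ N = ⊥) [(A ⊔ N).FiniteIndex] : IsVirtualRetract A := by
  have := Subgroup.normal_subgroupOf_of_le_normalizer hA
  have := Subgroup.normal_subgroupOf_sup_of_le_normalizer hA
  have hbot : N.subgroupOf A = ⊥ := by
    rw [Subgroup.subgroupOf_eq_bot, disjoint_iff, inf_comm, hAN]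
  let φ : A ≃* (A ⊔ N : Subgroup G) ⧸ N.subgroupOf (A ⊔ N) :=
    (QuotientGroup.quotientBot.symm.trans (QuotientGroup.quotientMulEquivOfEq hbot.symm)).trans
      (QuotientGroup.quotientInfEquivProdNormalizerQuotient A N hA)
  exact isVirtualRetract_iff.2 ⟨A ⊔ N, le_sup_left, inferInstance,
    φ.symm.toMonoidHom.comp (QuotientGroup.mk' _), MonoidHom.ext φ.symm_apply_apply⟩

theorem Subgroup.relIndex_eq_ncard_orbit (X K : Subgroup G) :
    X.relIndex K = (MulAction.orbit K ((1 : G) : G ⧸ X)).ncard := by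
  rw [← MulAction.index_stabilizer, Subgroup.relIndex]
  congr 1
  ext k
  change (k : G) ∈ X ↔ (k : G) • ((1 : G) : G ⧸ X) = (1 : G)
  rw [MulAction.Quotient.smul_coe, smul_eq_mul, mul_one, QuotientGroup.eq, mul_one, inv_mem_iff]

theorem Subgroup.relIndex_sup_of_le_normalizer {A N X : Subgroup G}
    (hA : A ≤ Subgroup.normalizer N) (hAX : A ≤ X) : X.relIndex (A ⊔ N) = X.relIndex N := by
  rw [X.relIndex_eq_ncard_orbit, X.relIndex_eq_ncard_orbit]
  congr 1
  refine Set.Subset.antisymm ?_ fun q ⟨n, hn⟩ ↦ ⟨⟨n, le_sup_right (b := N) n.2⟩, hn⟩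
  rintro q ⟨⟨y, hy⟩, rfl⟩
  rw [← SetLike.mem_coe, sup_comm, Subgroup.coe_mul_of_right_le_normalizer_left N A hA] at hy
  obtain ⟨n, hn, a, ha, rfl⟩ := hy
  refine ⟨⟨n, hn⟩, ?_⟩
  change (n : G) • ((1 : G) : G ⧸ X) = (n * a) • ((1 : G) : G ⧸ X)
  simp only [MulAction.Quotient.smul_coe, smul_eq_mul, mul_one, QuotientGroup.eq]
  simpa using hAX ha

theorem Subgroup.finite_inf_of_relIndex_ne_zero {H A B : Subgroup G} (hidx : H.relIndex A ≠ 0)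
    (hHB : H ⊓ B = ⊥) : Finite ↥(A ⊓ B) := by
  refine Nat.finite_of_card_ne_zero ?_
  rw [← Subgroup.relIndex_bot_left, ← hHB]
  exact Subgroup.relIndex_inter_ne_zero hidx B

theorem ResiduallyFinite.exists_normal_finiteIndex_inf_eq_bot (hG : ResiduallyFinite G)
    (F : Subgroup G) [Finite F] : ∃ M : Subgroup G, M.Normal ∧ M.FiniteIndex ∧ F ⊓ M = ⊥ := by
  choose W hW_normal hW_finiteIndex hW using fun f : {f : F // f ≠ 1} ↦
    hG f (by simpa using f.2)
  refine ⟨⨅ f, W f, Subgroup.normal_iInf_normal hW_normal,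
    Subgroup.finiteIndex_iInf hW_finiteIndex, (Subgroup.eq_bot_iff_forall _).2 fun x hx ↦ ?_⟩
  by_contra hx1
  exact hW ⟨⟨x, hx.1⟩, by simpa using hx1⟩ (Subgroup.mem_iInf.1 hx.2 _)

theorem isVirtualRetract_of_le_normalizer_of_finite (hG : ResiduallyFinite G) {A N : Subgroup G}
    (hA : A ≤ Subgroup.normalizer N) [Finite ↥(A ⊓ N)] [(A ⊔ N).FiniteIndex] :
    IsVirtualRetract A := by
  obtain ⟨M, hM_normal, hM_finiteIndex, hM⟩ := hG.exists_normal_finiteIndex_inf_eq_bot (A ⊓ N)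
  have hA' : A ≤ Subgroup.normalizer (N ⊓ M) :=
    (le_inf hA Subgroup.le_normalizer_of_normal).trans Subgroup.inf_normalizer_le_normalizer_inf
  have : (A ⊔ N ⊓ M).FiniteIndex := by
    have hMN : (N ⊓ M).relIndex N ≠ 0 := by
      rw [Subgroup.inf_relIndex_left]
      exact (Subgroup.isFiniteRelIndex_of_finiteIndex (K := N)).relIndex_ne_zero
    have hN : (A ⊔ N ⊓ M).relIndex N ≠ 0 :=
      fun h ↦ hMN (Subgroup.relIndex_eq_zero_of_le_left le_sup_right h)
    rw [Subgroup.finiteIndex_iff, ← Subgroup.relIndex_mul_index (sup_le_sup_left inf_le_left A),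
      Subgroup.relIndex_sup_of_le_normalizer hA le_sup_left]
    exact mul_ne_zero hN Subgroup.FiniteIndex.index_ne_zero
  exact isVirtualRetract_of_le_normalizer hA' (by rw [← inf_assoc, hM])

section Pullback

variable {A L : Subgroup G} {M : Type*} [Group M] (κ : L →* M) (C : Subgroup M)

theorem coe_mem_map_comap_iff (x : L) : (x : G) ∈ (C.comap κ).map L.subtype ↔ κ x ∈ C :=
  Subgroup.mem_map_iff_mem L.subtype_injective

theorem le_normalizer_map_comap [L.Normal]
    (hC : ∀ a ∈ A, ∀ x : L, κ x ∈ C → κ (MulAut.conjNormal a x) ∈ C) :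
    A ≤ Subgroup.normalizer ((C.comap κ).map L.subtype) := by
  rw [Subgroup.le_normalizer_iff]
  rintro a ha _ ⟨x, hx, rfl⟩
  exact ⟨MulAut.conjNormal a x, hC a ha x hx, MulAut.conjNormal_apply a x⟩

theorem finite_inf_map_comap (hUC : Finite ↥((A.subgroupOf L).map κ ⊓ C))
    (hker : Finite ↥(A ⊓ κ.ker.map L.subtype)) : Finite ↥(A ⊓ (C.comap κ).map L.subtype) := by
  let ψ : ↥(A ⊓ (C.comap κ).map L.subtype) →* M :=
    κ.comp (Subgroup.inclusion (inf_le_right.trans (Subgroup.map_subtype_le _)))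
  have hψ : ψ.range ≤ (A.subgroupOf L).map κ ⊓ C := by
    rintro _ ⟨x, rfl⟩
    exact ⟨⟨_, x.2.1, rfl⟩, (coe_mem_map_comap_iff κ C _).1 x.2.2⟩
  rw [ψ.finite_iff_finite_ker_range]
  refine ⟨Finite.of_injective
    (fun x : ψ.ker ↦ (⟨x, x.1.2.1, ⟨_, x.2, rfl⟩⟩ : ↥(A ⊓ κ.ker.map L.subtype)))
    fun x y h ↦ Subtype.ext (Subtype.ext (congrArg Subtype.val h :)), ?_⟩
  exact Finite.of_injective _ (Subgroup.inclusion_injective hψ)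

end Pullback

theorem finiteIndex_sup_map_comap {A L : Subgroup G} [L.FiniteIndex] {M : Type*} [CommGroup M]
    (κ : L →* M) (C : Subgroup M) [((A.subgroupOf L).map κ ⊔ C).FiniteIndex] :
    (A ⊔ (C.comap κ).map L.subtype).FiniteIndex := by
  let W := ((A.subgroupOf L).map κ ⊔ C).comap κ
  have hW : W.map L.subtype ≤ A ⊔ (C.comap κ).map L.subtype := by
    rintro _ ⟨x, hx, rfl⟩
    obtain ⟨_, ⟨y, hy, rfl⟩, c, hc, hyc⟩ := Subgroup.mem_sup.1 hx
    have hyA : (y : G) ∈ A := hy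
    have : ((y⁻¹ * x : L) : G) ∈ (C.comap κ).map L.subtype :=
      (coe_mem_map_comap_iff κ C _).2 (by rwa [map_mul, map_inv, ← hyc, inv_mul_cancel_left])
    simpa using Subgroup.mul_mem_sup hyA this
  have : (W.map L.subtype).FiniteIndex := by
    rw [Subgroup.finiteIndex_iff, Subgroup.index_map_subtype, Subgroup.index_comap]
    exact mul_ne_zero (Subgroup.isFiniteRelIndex_of_finiteIndex).relIndex_ne_zero
      Subgroup.FiniteIndex.index_ne_zero
  exact Subgroup.finiteIndex_of_le hW

theorem isVirtualRetract_of_equivariant (hG : ResiduallyFinite G) {A L : Subgroup G} [L.Normal]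
    [L.FiniteIndex] {Γ M : Type*} [Group Γ] [Finite Γ] [CommGroup M] [Group.FG M]
    [MulDistribMulAction Γ M] (τ : A →* Γ) (κ : L →* M)
    (hκ : ∀ (a : A) (x : L), κ (MulAut.conjNormal (a : G) x) = τ a • κ x)
    (hker : Finite ↥(A ⊓ κ.ker.map L.subtype)) : IsVirtualRetract A := by
  let U := (A.subgroupOf L).map κ
  have hU : ∀ γ : τ.range, ∀ u ∈ U, γ • u ∈ U := by
    rintro ⟨_, a, rfl⟩ _ ⟨x, hx, rfl⟩
    refine ⟨MulAut.conjNormal (a : G) x, ?_, hκ a x⟩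
    simpa [Subgroup.mem_subgroupOf] using A.mul_mem (A.mul_mem a.2 hx) (A.inv_mem a.2)
  obtain ⟨C, hC, hUC, hUC_index⟩ := U.exists_invariant_finite_inf_finiteIndex_sup hU
  have hA := le_normalizer_map_comap κ C fun a ha x hx ↦ by
    simpa [hκ ⟨a, ha⟩ x, Subgroup.smul_def] using hC ⟨τ ⟨a, ha⟩, ⟨a, ha⟩, rfl⟩ _ hx
  have := finite_inf_map_comap κ C hUC hker
  have := finiteIndex_sup_map_comap (A := A) κ C
  exact isVirtualRetract_of_le_normalizer_of_finite hG hA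

section Induced

open scoped IsMulCommutative

variable {K H L : Subgroup G} [IsMulCommutative H] {hHK : H ≤ K} {ρ : K →* H} [L.Normal]
  (hLK : L ≤ K) (A : Subgroup G)

theorem retraction_apply_conj (hρ : ρ.comp (Subgroup.inclusion hHK) = MonoidHom.id H) (h : H)
    (y : K) : ρ ((Subgroup.inclusion hHK h)⁻¹ * y * Subgroup.inclusion hHK h) = ρ y := by
  have hρh : ρ (Subgroup.inclusion hHK h) = h := DFunLike.congr_fun hρ h
  rw [map_mul, map_mul, map_inv, hρh, mul_comm, mul_inv_cancel_left]

noncomputable def inducedHom (hρ : ρ.comp (Subgroup.inclusion hHK) = MonoidHom.id H) :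
    L →* (A ⧸ H.subgroupOf A → H) :=
  MonoidHom.pi fun q ↦ q.liftOn'
    (fun a ↦ ρ.comp ((Subgroup.inclusion hLK).comp (MulAut.conjNormal (a : G)⁻¹).toMonoidHom))
    fun a b hab ↦ MonoidHom.ext fun x ↦ by
      have := retraction_apply_conj hρ
        ⟨((a⁻¹ * b : A) : G), (QuotientGroup.leftRel_apply.1 hab : a⁻¹ * b ∈ H.subgroupOf A)⟩
        (Subgroup.inclusion hLK (MulAut.conjNormal (a : G)⁻¹ x))
      simp only [MonoidHom.comp_apply, MulEquiv.coe_toMonoidHom, ← this]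
      congr 1
      ext
      simp [mul_assoc]

theorem inducedHom_apply_mk (hρ : ρ.comp (Subgroup.inclusion hHK) = MonoidHom.id H) (x : L)
    (a : A) :
    inducedHom hLK A hρ x a = ρ (Subgroup.inclusion hLK (MulAut.conjNormal (a : G)⁻¹ x)) :=
  rfl

theorem inducedHom_conj (hρ : ρ.comp (Subgroup.inclusion hHK) = MonoidHom.id H) (a : A) (x : L)
    (q : A ⧸ H.subgroupOf A) :
    inducedHom hLK A hρ (MulAut.conjNormal (a : G) x) q = inducedHom hLK A hρ x (a⁻¹ • q) := by
  induction q using QuotientGroup.induction_on with | H b => ?_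
  rw [MulAction.Quotient.smul_mk, inducedHom_apply_mk, inducedHom_apply_mk]
  congr 2
  ext
  simp [mul_assoc]

theorem inf_map_ker_inducedHom_eq_bot (hρ : ρ.comp (Subgroup.inclusion hHK) = MonoidHom.id H) :
    H ⊓ (inducedHom hLK A hρ).ker.map L.subtype = ⊥ := by
  refine (Subgroup.eq_bot_iff_forall _).2 ?_
  rintro _ ⟨hxH, x, hx, rfl⟩
  have hρx : ρ (Subgroup.inclusion hLK x) = ⟨x, hxH⟩ := DFunLike.congr_fun hρ ⟨x, hxH⟩
  have := congrFun hx (1 : A)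
  rw [inducedHom_apply_mk, OneMemClass.coe_one, inv_one, map_one, MulAut.one_apply, hρx] at this
  exact congrArg Subtype.val this

end Induced

open scoped IsMulCommutative in
theorem isVirtualRetract_of_isMulCommutative (hG : ResiduallyFinite G) {H A : Subgroup G}
    [IsMulCommutative H] [Group.FG H] (hH : IsVirtualRetract H) (hidx : H.relIndex A ≠ 0) :
    IsVirtualRetract A := by
  obtain ⟨K, hHK, hK, ρ, hρ⟩ := isVirtualRetract_iff.1 hH
  let Q := A ⧸ H.subgroupOf A
  have : Finite Q := Nat.finite_of_card_ne_zero hidx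
  let _ := arrowMulDistribMulAction (G := Equiv.Perm Q) (A := Q) (M := H)
  exact isVirtualRetract_of_equivariant hG (MulAction.toPermHom A Q)
    (inducedHom K.normalCore_le A hρ) (fun a x ↦ funext (inducedHom_conj _ A hρ a x))
    (Subgroup.finite_inf_of_relIndex_ne_zero hidx (inf_map_ker_inducedHom_eq_bot _ A hρ))

end Group

theorem virtualRetract_of_finiteIndex_overgroup_general {G : Type*} [Group G]
    (hG : ResiduallyFinite G) (H A : Subgroup G)
    (hvr : IsVirtualRetract H) (hfg : H.FG) (hva : VirtuallyAbelian ↥H)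
    (hidx : H.relIndex A ≠ 0) :
    IsVirtualRetract A := by
  obtain ⟨B, hB, hB_comm⟩ := hva
  have : IsMulCommutative B := ⟨⟨hB_comm⟩⟩
  have : Group.FG H := (Group.fg_iff_subgroup_fg H).2 hfg
  have : Group.FG B := Subgroup.fg_of_index_ne_zero B
  let e := B.equivMapOfInjective H.subtype H.subtype_injective
  have : Group.FG (B.map H.subtype) := Group.fg_of_surjective (f := e.toMonoidHom) e.surjective
  have hBH : (B.map H.subtype).relIndex H ≠ 0 := by
    rw [Subgroup.relIndex, Subgroup.subgroupOf,
      Subgroup.comap_map_eq_self_of_injective H.subtype_injective]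
    exact hB.index_ne_zero
  exact isVirtualRetract_of_isMulCommutative hG
    (hvr.of_le_of_relIndex_ne_zero (Subgroup.map_subtype_le B) hBH)
    (Subgroup.relIndex_ne_zero_trans hBH hidx)

/-- Theorem 1.3: if `G` is residually finite, `H ≤vr G` is finitely generated and virtually
abelian, and `H ≤ A ≤ G` with `|A : H| < ∞`, then `A ≤vr G`. -/
theorem virtualRetract_of_finiteIndex_overgroup {G : Type*} [Group G]
    (hG : ResiduallyFinite G) (H A : Subgroup G)
    (hvr : IsVirtualRetract H) (hfg : H.FG) (hva : VirtuallyAbelian ↥H)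
    (hHA : H ≤ A) (hidx : H.relIndex A ≠ 0) :
    IsVirtualRetract A :=
  virtualRetract_of_finiteIndex_overgroup_general hG H A hvr hfg hva hidx
end

section
/- Let X be a group and let G = (X × X) ⋊ ⟨α⟩ be the semidirect product of X × X with a cyclic group of order 2 generated by α, where α acts by swapping the two coordinates: α(x,y)α⁻¹ = (y,x). Let H = {(x,x) : x ∈ X} be the diagonal subgroup and let A = H⟨α⟩ be the subgroup of G generated by H and α (so A is the centralizer of α in G and |A : H| = 2). If A is a virtual retract of G, then X has an abelian subgroup of finite index. -/
/-- The coordinate-swap automorphism of `X × X`. -/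
def swapAut (X : Type*) [Group X] : MulAut (X × X) := (MulEquiv.prodComm : X × X ≃* X × X)

/-- The action of `ℤ/2` on `X × X` in which the generator swaps the two coordinates. -/
def swapAction (X : Type*) [Group X] : Multiplicative (ZMod 2) →* MulAut (X × X) where
  toFun a := if Multiplicative.toAdd a = 0 then 1 else swapAut X
  map_one' := by simp
  map_mul' a b := by
    have h2 : ∀ c : ZMod 2, c = 0 ∨ c = 1 := by decide
    have hsq : swapAut X * swapAut X = 1 := by
      ext p <;> rfl
    have e11 : (1 + 1 : ZMod 2) = 0 := by decide
    have e10 : (1 : ZMod 2) ≠ 0 := by decide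
    rcases h2 (Multiplicative.toAdd a) with ha | ha <;>
      rcases h2 (Multiplicative.toAdd b) with hb | hb <;>
      simp [toAdd_mul, ha, hb, e11, e10, hsq]

/-- The wreath-type product `G = (X × X) ⋊ ⟨α⟩₂` where `α` swaps the coordinates. -/
abbrev WreathZ2 (X : Type*) [Group X] :=
  SemidirectProduct (X × X) (Multiplicative (ZMod 2)) (swapAction X)

/-- The diagonal subgroup `H = {(x,x) : x ∈ X}` of `G = (X × X) ⋊ ⟨α⟩₂`. -/
def diagSubgroup (X : Type*) [Group X] : Subgroup (WreathZ2 X) :=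
  ((SemidirectProduct.inl : (X × X) →* WreathZ2 X).comp
    ((MonoidHom.id X).prod (MonoidHom.id X))).range

/-- The order-two element `α` of `G = (X × X) ⋊ ⟨α⟩₂`. -/
def wreathAlpha (X : Type*) [Group X] : WreathZ2 X :=
  SemidirectProduct.inr (Multiplicative.ofAdd (1 : ZMod 2))

/-! Let `ρ : K → A` be a retraction onto `A = H⟨α⟩` from a finite-index subgroup `K`, and let
`B = {x | (x, 1) ∈ K}`, a finite-index subgroup of `X`. Since `α` is central in `A` and fixed by
`ρ`, the map `ρ` is invariant under conjugation by `α`, so `ρ (x, 1) = ρ (1, x)`. Hence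
`ρ (x, 1) ^ 2 = ρ (x, x) = (x, x)`, and since `(x, 1)` commutes with `(1, y)`, the elements
`ρ (x, 1)` and `ρ (y, 1)` commute. Every element of `A` has diagonal `X × X`-part, and on such
elements the first coordinate is multiplicative; so `B` consists of squares of pairwise
commuting elements of `X`, and is abelian. -/

theorem Subgroup.FiniteIndex.comap {G G' : Type*} [Group G] [Group G'] {H : Subgroup G}
    (hH : H.FiniteIndex) (f : G' →* G) : (H.comap f).FiniteIndex :=
  ⟨by
    rw [Subgroup.index_comap]
    exact mt H.index_eq_zero_of_relIndex_eq_zero hH.index_ne_zero⟩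

structure IsRetractionOnto {G : Type*} [Group G] {K : Subgroup G} (ρ : K →* G)
    (H : Subgroup G) : Prop where
  le : H ≤ K
  map_mem : ∀ k, ρ k ∈ H
  map_eq_self : ∀ h (hh : h ∈ H), ρ ⟨h, le hh⟩ = h

theorem IsRetractionOnto.map_conj {G : Type*} [Group G] {K H : Subgroup G} {ρ : K →* G}
    (hρ : IsRetractionOnto ρ H) {a : G} (ha : a ∈ H) (ha_comm : ∀ h ∈ H, Commute a h)
    (k : K) : ρ (⟨a, hρ.le ha⟩ * k * ⟨a, hρ.le ha⟩⁻¹) = ρ k := by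
  rw [map_mul, map_mul, map_inv, hρ.map_eq_self a ha, (ha_comm _ (hρ.map_mem k)).eq,
    mul_inv_cancel_right]

namespace WreathZ2

open SemidirectProduct

variable {X : Type*} [Group X]

variable (X) in
abbrev diagAlphaSubgroup : Subgroup (WreathZ2 X) :=
  diagSubgroup X ⊔ Subgroup.zpowers (wreathAlpha X)

theorem swapAction_apply_of_fst_eq_snd (t : Multiplicative (ZMod 2)) {p : X × X}
    (hp : p.1 = p.2) : swapAction X t p = p := by
  simp only [swapAction, MonoidHom.coe_mk, OneHom.coe_mk]
  split_ifs
  · rfl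
  · exact Prod.ext hp.symm hp

variable (X) in
def leftDiagSubgroup : Subgroup (WreathZ2 X) where
  carrier := {g | g.left.1 = g.left.2}
  one_mem' := rfl
  mul_mem' {a b} ha hb := by
    change (a.left * swapAction X a.right b.left).1 = (a.left * swapAction X a.right b.left).2
    rw [swapAction_apply_of_fst_eq_snd _ hb]
    exact congrArg₂ (· * ·) ha hb
  inv_mem' {a} ha := by
    change (swapAction X a.right⁻¹ a.left⁻¹).1 = (swapAction X a.right⁻¹ a.left⁻¹).2
    rw [swapAction_apply_of_fst_eq_snd _ (congrArg (·⁻¹) ha : a.left.1⁻¹ = a.left.2⁻¹)]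
    exact congrArg (·⁻¹) ha

theorem wreathAlpha_mul_inl_mul_inv (p : X × X) :
    wreathAlpha X * inl p * (wreathAlpha X)⁻¹ = inl p.swap := by
  rw [wreathAlpha, ← map_inv, ← inl_aut]
  rfl

theorem fst_left_mul_of_mem_leftDiagSubgroup (g : WreathZ2 X) {h : WreathZ2 X}
    (hh : h ∈ leftDiagSubgroup X) : (g * h).left.1 = g.left.1 * h.left.1 := by
  rw [mul_left, swapAction_apply_of_fst_eq_snd _ hh]
  rfl

theorem diagAlphaSubgroup_le_leftDiagSubgroup : diagAlphaSubgroup X ≤ leftDiagSubgroup X := by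
  refine sup_le ?_ (Subgroup.zpowers_le.2 rfl)
  rintro _ ⟨x, rfl⟩
  rfl

theorem commute_wreathAlpha {g : WreathZ2 X} (hg : g ∈ leftDiagSubgroup X) :
    Commute (wreathAlpha X) g := by
  refine SemidirectProduct.ext ?_ (mul_comm _ _)
  change 1 * swapAction X _ g.left = g.left * swapAction X _ 1
  rw [one_mul, map_one, mul_one, swapAction_apply_of_fst_eq_snd _ hg]

theorem wreathAlpha_mem_diagAlphaSubgroup : wreathAlpha X ∈ diagAlphaSubgroup X :=
  Subgroup.mem_sup_right (Subgroup.mem_zpowers _)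

theorem inl_diag_mem_diagAlphaSubgroup (x : X) : inl (x, x) ∈ diagAlphaSubgroup X :=
  Subgroup.mem_sup_left ⟨x, rfl⟩

theorem inl_swap_mem {K : Subgroup (WreathZ2 X)} (hαK : wreathAlpha X ∈ K) {p : X × X}
    (hp : inl p ∈ K) : inl p.swap ∈ K := by
  rw [← wreathAlpha_mul_inl_mul_inv]
  exact mul_mem (mul_mem hαK hp) (inv_mem hαK)

section Retraction

variable {K : Subgroup (WreathZ2 X)} {ρ : K →* WreathZ2 X}

theorem map_inl_swap (hρ : IsRetractionOnto ρ (diagAlphaSubgroup X)) {p : X × X}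
    (hp : inl p ∈ K) :
    ρ ⟨inl p.swap, inl_swap_mem (hρ.le wreathAlpha_mem_diagAlphaSubgroup) hp⟩ =
      ρ ⟨inl p, hp⟩ := by
  let a : K := ⟨wreathAlpha X, hρ.le wreathAlpha_mem_diagAlphaSubgroup⟩
  have hswap : (⟨inl p.swap, inl_swap_mem a.2 hp⟩ : K) = a * ⟨inl p, hp⟩ * a⁻¹ :=
    Subtype.ext (wreathAlpha_mul_inl_mul_inv p).symm
  rw [hswap]
  exact hρ.map_conj wreathAlpha_mem_diagAlphaSubgroup
    (fun _ h => commute_wreathAlpha (diagAlphaSubgroup_le_leftDiagSubgroup h)) _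

theorem fst_left_map_inl_sq (hρ : IsRetractionOnto ρ (diagAlphaSubgroup X)) {x : X}
    (hx : inl (x, 1) ∈ K) :
    (ρ ⟨inl (x, 1), hx⟩).left.1 ^ 2 = x := by
  have hsq : ρ ⟨inl (x, 1), hx⟩ * ρ ⟨inl (x, 1), hx⟩ = inl (x, x) := by
    nth_rw 2 [← map_inl_swap hρ hx]
    rw [← map_mul]
    refine Eq.trans (congrArg ρ (Subtype.ext ?_))
      (hρ.map_eq_self _ (inl_diag_mem_diagAlphaSubgroup x))
    simp [← map_mul]
  have hρx := diagAlphaSubgroup_le_leftDiagSubgroup (hρ.map_mem ⟨inl (x, 1), hx⟩)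
  rw [sq, ← fst_left_mul_of_mem_leftDiagSubgroup _ hρx, hsq]
  rfl

theorem commute_fst_left_map_inl (hρ : IsRetractionOnto ρ (diagAlphaSubgroup X)) {x y : X}
    (hx : inl (x, 1) ∈ K) (hy : inl (y, 1) ∈ K) :
    Commute (ρ ⟨inl (x, 1), hx⟩).left.1 (ρ ⟨inl (y, 1), hy⟩).left.1 := by
  have hcomm : Commute (ρ ⟨inl (x, 1), hx⟩) (ρ ⟨inl (y, 1), hy⟩) := by
    rw [← map_inl_swap hρ hy]
    refine Commute.map (Subtype.ext ?_) ρ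
    simp only [Subgroup.coe_mul, ← map_mul, Prod.swap_prod_mk, Prod.mk_mul_mk, mul_one, one_mul]
  have hρx := diagAlphaSubgroup_le_leftDiagSubgroup (hρ.map_mem ⟨inl (x, 1), hx⟩)
  have hρy := diagAlphaSubgroup_le_leftDiagSubgroup (hρ.map_mem ⟨inl (y, 1), hy⟩)
  have hfst := congrArg (fun g : WreathZ2 X => g.left.1) hcomm.eq
  rwa [fst_left_mul_of_mem_leftDiagSubgroup _ hρx,
    fst_left_mul_of_mem_leftDiagSubgroup _ hρy] at hfst

end Retraction

end WreathZ2

open WreathZ2 in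
/-- Proposition 3.8: if `A = H⟨α⟩` is a virtual retract of `G = (X × X) ⋊ ⟨α⟩₂`, then `X`
is virtually abelian. -/
theorem virtuallyAbelian_of_virtualRetract_wreath (X : Type*) [Group X]
    (h : IsVirtualRetract (diagSubgroup X ⊔ Subgroup.zpowers (wreathAlpha X))) :
    ∃ B : Subgroup X, B.FiniteIndex ∧ ∀ x y : ↥B, x * y = y * x := by
  obtain ⟨K, hAK, hK, ρ, hρA, hρ_id⟩ := h
  have hρ : IsRetractionOnto ρ (diagAlphaSubgroup X) := ⟨hAK, hρA, hρ_id⟩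
  let ι : X →* WreathZ2 X := SemidirectProduct.inl.comp (MonoidHom.inl X X)
  refine ⟨K.comap ι, hK.comap ι, fun x y => Subtype.ext ?_⟩
  have hxy := (commute_fst_left_map_inl hρ x.2 y.2).pow_pow 2 2
  rwa [fst_left_map_inl_sq hρ x.2, fst_left_map_inl_sq hρ y.2] at hxy
end

section
/- If G is a residually finite group and H is a virtual retract of G, then H is closed in the profinite topology on G; that is, for every g ∈ G with g ∉ H there exists a finite-index subgroup K of G such that H ⊆ K and g ∉ K. -/
/-!
If `g ∉ K`, the subgroup `K` itself separates `g` from `H`. If `ρ : K → H` is the retraction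
and `g ∈ K \ H`, then `x = ρ(g)⁻¹ g ≠ 1` because `ρ(g) ∈ H`.
Residual finiteness gives a finite quotient `G ⧸ N` in which `x` survives. The elements `k ∈ K`
with `k ≡ ρ(k) mod N` form a finite-index subgroup: it is where two homomorphisms `K → G ⧸ N`
agree. It contains `H`, on which `ρ` is the identity, and it misses `g`.
-/

theorem MonoidHom.finiteIndex_eqLocus {M Q : Type*} [Group M] [Group Q] [Finite Q]
    (f g : M →* Q) : (f.eqLocus g).FiniteIndex :=
  Subgroup.finiteIndex_of_le (H := f.ker ⊓ g.ker) fun _ ⟨hf, hg⟩ =>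
    (f.mem_ker.mp hf).trans (g.mem_ker.mp hg).symm

theorem Subgroup.finiteIndex_map_subtype {G : Type*} [Group G] {K : Subgroup G} [K.FiniteIndex]
    (L : Subgroup K) [L.FiniteIndex] : (L.map K.subtype).FiniteIndex :=
  ⟨by
    rw [Subgroup.index_map_subtype]
    exact mul_ne_zero Subgroup.FiniteIndex.index_ne_zero Subgroup.FiniteIndex.index_ne_zero⟩

theorem exists_finiteIndex_ge_of_retraction_mod_normal {G : Type*} [Group G]
    {H K : Subgroup G} [K.FiniteIndex] (hHK : H ≤ K) (ρ : K →* G)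
    (hρ : ∀ (h : G) (hh : h ∈ H), ρ ⟨h, hHK hh⟩ = h) (N : Subgroup G) [N.Normal]
    [N.FiniteIndex] :
    ∃ L : Subgroup G, L.FiniteIndex ∧ H ≤ L ∧ ∀ k : K, (k : G) ∈ L → (ρ k)⁻¹ * k ∈ N := by
  let toQuotient : K →* G ⧸ N := (QuotientGroup.mk' N).comp K.subtype
  let ρQuotient : K →* G ⧸ N := (QuotientGroup.mk' N).comp ρ
  have : (toQuotient.eqLocus ρQuotient).FiniteIndex := toQuotient.finiteIndex_eqLocus ρQuotient
  refine ⟨(toQuotient.eqLocus ρQuotient).map K.subtype, Subgroup.finiteIndex_map_subtype _,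
    fun h hh => ⟨⟨h, hHK hh⟩, ?_, rfl⟩, fun k ⟨k', hk', hk'k⟩ => ?_⟩
  · change (h : G ⧸ N) = ρ ⟨h, hHK hh⟩
    rw [hρ h hh]
  · rw [Subtype.ext hk'k] at hk'
    exact QuotientGroup.eq.mp (hk' : (k : G ⧸ N) = ρ k).symm

/-- Lemma 2.2: a virtual retract of a residually finite group is closed in the
profinite topology. -/
theorem virtualRetract_closed_in_profinite_topology {G : Type*} [Group G]
    (hG : ResiduallyFinite G) (H : Subgroup G) (hvr : IsVirtualRetract H) :
    ∀ g : G, g ∉ H → ∃ K : Subgroup G, K.FiniteIndex ∧ H ≤ K ∧ g ∉ K := by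
  obtain ⟨K, hHK, hK, ρ, hρH, hρ⟩ := hvr
  intro g hg
  by_cases hgK : g ∈ K
  swap
  · exact ⟨K, hK, hHK, hgK⟩
  have hx : (ρ ⟨g, hgK⟩)⁻¹ * g ≠ 1 := fun h =>
    hg (eq_of_inv_mul_eq_one h ▸ hρH ⟨g, hgK⟩)
  obtain ⟨N, hN, hNfi, hxN⟩ := hG _ hx
  obtain ⟨L, hL, hHL, hLN⟩ :=
    exists_finiteIndex_ge_of_retraction_mod_normal hHK ρ hρ N
  exact ⟨L, hL, hHL, fun hgL => hxN (hLN ⟨g, hgK⟩ hgL)⟩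
end

section
/- If G is a group with property (VRC), then G is residually finite. -/
/-- Property (VRC): every cyclic subgroup is a virtual retract. -/
def VRC (G : Type*) [Group G] : Prop :=
  ∀ g : G, IsVirtualRetract (Subgroup.zpowers g)

/-!
Given `g ≠ 1`, pick a finite-index subgroup `M` of `⟨g⟩` missing `g`: `⟨g²⟩` (which has index
at most two) if it misses `g`, and the trivial subgroup otherwise, since then `g` has finite order.
Pulling `M` back along a virtual retraction `K → ⟨g⟩` gives a finite-index subgroup of `G`
meeting `⟨g⟩` inside `M`; its normal core is a finite-index normal subgroup avoiding `g`.
-/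

open Subgroup

section

variable {G : Type*} [Group G]

lemma Subgroup.relIndex_zpowers_sq_dvd_two (g : G) :
    (zpowers (g ^ 2)).relIndex (zpowers g) ∣ 2 := by
  refine relIndex_dvd_two_iff.2 ⟨g, mem_zpowers g, ?_⟩
  rintro _ ⟨k, rfl⟩
  obtain ⟨m, rfl | rfl⟩ := Int.even_or_odd' k
  · exact Or.inr ⟨m, by simp only [← zpow_natCast, ← zpow_mul]; ring_nf⟩
  · exact Or.inl ⟨m + 1, by simp only [← zpow_natCast, ← zpow_mul, ← zpow_add_one]; ring_nf⟩

lemma exists_notMem_relIndex_zpowers_ne_zero {g : G} (hg : g ≠ 1) :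
    ∃ M : Subgroup G, g ∉ M ∧ M.relIndex (zpowers g) ≠ 0 := by
  by_cases hsq : g ∈ zpowers (g ^ 2)
  · obtain ⟨k, hk⟩ := hsq
    have hfin : IsOfFinOrder g := isOfFinOrder_iff_zpow_eq_one.2
      ⟨2 * k - 1, by omega, by
        rw [zpow_sub_one, mul_inv_eq_one, zpow_mul]
        exact_mod_cast hk⟩
    refine ⟨⊥, by simpa using hg, ?_⟩
    rw [relIndex_bot_left, Nat.card_zpowers]
    exact orderOf_ne_zero_iff.2 hfin
  · exact ⟨zpowers (g ^ 2), hsq, ne_zero_of_dvd_ne_zero two_ne_zero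
      (relIndex_zpowers_sq_dvd_two g)⟩

lemma IsVirtualRetract.exists_finiteIndex_inf_le {H M : Subgroup G} (hH : IsVirtualRetract H)
    (hM : M.relIndex H ≠ 0) : ∃ L : Subgroup G, L.FiniteIndex ∧ H ⊓ L ≤ M := by
  obtain ⟨K, _, hK, ρ, hρH, hρ⟩ := hH
  refine ⟨(M.comap ρ).map K.subtype, ⟨?_⟩, ?_⟩
  · have hrange : ρ.range ≤ H := by
      rintro _ ⟨k, rfl⟩
      exact hρH k
    rw [index_map_subtype, index_comap]
    exact mul_ne_zero (fun h ↦ hM (relIndex_eq_zero_of_le_right hrange h)) hK.index_ne_zero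
  · rintro _ ⟨hk, k, hkM, rfl⟩
    have hρk : ρ k = k := hρ k hk
    rw [coe_subtype, ← hρk]
    exact hkM

end

/-- Lemma 2.3: a group with property (VRC) is residually finite. -/
theorem residuallyFinite_of_VRC {G : Type*} [Group G] (hG : VRC G) :
    ResiduallyFinite G := by
  intro g hg
  obtain ⟨M, hgM, hM⟩ := exists_notMem_relIndex_zpowers_ne_zero hg
  obtain ⟨L, hL, hLM⟩ := (hG g).exists_finiteIndex_inf_le hM
  exact ⟨L.normalCore, L.normalCore_normal, inferInstance,
    fun hgL ↦ hgM (hLM ⟨mem_zpowers g, L.normalCore_le hgL⟩)⟩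
end

section
/- Let G be a residually finite group, let H be a finitely generated virtually abelian subgroup of G which is a virtual retract of G, and let A be a subgroup of G with H ⊆ A and |A : H| < ∞. Then there exist a finitely generated virtually abelian group P and a surjective homomorphism φ : G → P whose restriction to A is injective. -/
/-!
Let `ρ : K → H` be a virtual retraction and `L` the normal core of `ker ρ`. As `H ∩ ker ρ = 1`,
the group `A ∩ L` embeds in `A / H` and is finite, so residual finiteness provides a normal
subgroup `M` of finite index missing its nontrivial elements; then `G → G / (L ∩ M)` is
injective on `A`. The quotient `G / (L ∩ M)` is finitely generated and virtually abelian: on the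
finite-index subgroup `core K ∩ M`, the homomorphism `k ↦ (ρ (g⁻¹ k g))_{gK ∈ G / K}` into the
finite power `H ^ (G / K)` has kernel inside `L`, so the image of `core K ∩ M` in `G / (L ∩ M)`
is a quotient of a subgroup of `H ^ (G / K)`.
-/

universe u

open Subgroup

theorem Subgroup.map_mul_comm {G Q : Type*} [Group G] [Group Q] {B : Subgroup G}
    (hB : ∀ x y : B, x * y = y * x) (f : G →* Q) : ∀ x y : B.map f, x * y = y * x := by
  rintro ⟨_, x, hx, rfl⟩ ⟨_, y, hy, rfl⟩
  ext
  simp only [coe_mul, ← map_mul]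
  exact congrArg (fun b : B => f b) (hB ⟨x, hx⟩ ⟨y, hy⟩)

namespace VirtuallyAbelian

variable {G Q : Type*} [Group G] [Group Q]

theorem of_surjective (hG : VirtuallyAbelian G) {f : G →* Q} (hf : Function.Surjective f) :
    VirtuallyAbelian Q := by
  obtain ⟨B, hB, hBcomm⟩ := hG
  exact ⟨B.map f, ⟨ne_zero_of_dvd_ne_zero hB.index_ne_zero (B.index_map_dvd hf)⟩,
    map_mul_comm hBcomm f⟩

theorem of_finiteIndex {K : Subgroup G} [K.FiniteIndex] (hK : VirtuallyAbelian K) :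
    VirtuallyAbelian G := by
  obtain ⟨B, hB, hBcomm⟩ := hK
  refine ⟨B.map K.subtype, ⟨?_⟩, map_mul_comm hBcomm _⟩
  rw [index_map_subtype]
  exact mul_ne_zero hB.index_ne_zero FiniteIndex.index_ne_zero

theorem subgroup (hG : VirtuallyAbelian G) (S : Subgroup G) : VirtuallyAbelian S := by
  obtain ⟨B, hB, hBcomm⟩ := hG
  refine ⟨B.subgroupOf S, inferInstance, fun x y => ?_⟩
  ext
  exact congrArg (Subtype.val : B → G) (hBcomm ⟨x.1, x.2⟩ ⟨y.1, y.2⟩)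

theorem pi {ι : Type*} [Finite ι] (hG : VirtuallyAbelian G) : VirtuallyAbelian (ι → G) := by
  obtain ⟨B, hB, hBcomm⟩ := hG
  have := Fintype.ofFinite ι
  refine ⟨Subgroup.pi Set.univ fun _ => B, ⟨?_⟩, fun x y => ?_⟩
  · rw [index_pi]
    exact Finset.prod_ne_zero_iff.mpr fun _ _ => hB.index_ne_zero
  · ext i
    exact congrArg Subtype.val (hBcomm ⟨x.1 i, x.2 i trivial⟩ ⟨y.1 i, y.2 i trivial⟩)

end VirtuallyAbelian

theorem Group.fg_of_finiteIndex {G : Type*} [Group G] (K : Subgroup G) [K.FiniteIndex]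
    [hK : Group.FG K] : Group.FG G := by
  have hsup : K ⊔ closure (Set.range fun q : G ⧸ K => q.out) = ⊤ := by
    refine eq_top_iff.mpr fun g _ => ?_
    obtain ⟨k, hk⟩ := QuotientGroup.mk_out_eq_mul K g
    rw [show g = (g : G ⧸ K).out * k⁻¹ by simp [hk]]
    exact mul_mem (mem_sup_right (subset_closure ⟨_, rfl⟩)) (mem_sup_left (inv_mem k.2))
  rw [Group.fg_def, ← hsup]
  exact ((Group.fg_iff_subgroup_fg K).mp hK).sup
    ((Group.fg_iff_subgroup_fg _).mp (Group.closure_finite_fg _))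

theorem CommGroup.fg_subgroup {C : Type*} [CommGroup C] [Group.FG C] (S : Subgroup C) :
    Group.FG S := by
  have : IsNoetherian ℤ (Additive C) :=
    have : Module.Finite ℤ (Additive C) := Module.Finite.iff_addGroup_fg.mpr inferInstance
    isNoetherian_of_isNoetherianRing_of_finite ℤ _
  have hS := IsNoetherian.noetherian (AddSubgroup.toIntSubmodule S.toAddSubgroup)
  rw [Group.fg_iff_subgroup_fg, Subgroup.fg_iff_add_fg]
  simpa only [AddSubgroup.toIntSubmodule_toAddSubgroup] using
    (Submodule.fg_iff_addSubgroup_fg _).mp hS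

theorem Group.fg_subgroup_of_virtuallyAbelian {G : Type*} [Group G] [Group.FG G]
    (hG : VirtuallyAbelian G) (S : Subgroup G) : Group.FG S := by
  obtain ⟨B, hB, hBcomm⟩ := hG
  let : CommGroup B := { mul_comm := hBcomm }
  have : Group.FG ((B ⊓ S).subgroupOf B) := CommGroup.fg_subgroup _
  have : Group.FG ((B ⊓ S).subgroupOf S) :=
    Group.fg_of_surjective (f := ((subgroupOfEquivOfLe inf_le_left).trans
      (subgroupOfEquivOfLe inf_le_right).symm).toMonoidHom) (MulEquiv.surjective _)
  rw [inf_subgroupOf_right] at this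
  exact Group.fg_of_finiteIndex (B.subgroupOf S)

theorem fg_virtuallyAbelian_of_surjective_of_ker_le {K R S : Type*} [Group K] [Group R] [Group S]
    [Group.FG R] (hR : VirtuallyAbelian R) (f : K →* R) {g : K →* S}
    (hg : Function.Surjective g) (hker : f.ker ≤ g.ker) :
    Group.FG S ∧ VirtuallyAbelian S := by
  set e : f.range →* S := (QuotientGroup.lift f.ker g hker).comp
    (QuotientGroup.quotientKerEquivRange f).symm.toMonoidHom
  have he : Function.Surjective e :=
    (QuotientGroup.lift_surjective_of_surjective _ g hg hker).comp (MulEquiv.surjective _)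
  have := Group.fg_subgroup_of_virtuallyAbelian hR f.range
  exact ⟨Group.fg_of_surjective he, (hR.subgroup f.range).of_surjective he⟩

theorem QuotientGroup.fg_virtuallyAbelian_of_ker_le {G R : Type*} [Group G] [Group R]
    [Group.FG R] (hR : VirtuallyAbelian R) (L : Subgroup G) [L.Normal] (K : Subgroup G)
    [K.FiniteIndex] (ψ : K →* R) (hψ : ∀ k, ψ k = 1 → (k : G) ∈ L) :
    Group.FG (G ⧸ L) ∧ VirtuallyAbelian (G ⧸ L) := by
  have : (K.map (QuotientGroup.mk' L)).FiniteIndex := ⟨ne_zero_of_dvd_ne_zero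
    FiniteIndex.index_ne_zero (K.index_map_dvd (QuotientGroup.mk'_surjective L))⟩
  obtain ⟨hfg, hva⟩ := fg_virtuallyAbelian_of_surjective_of_ker_le hR ψ
    ((QuotientGroup.mk' L).subgroupMap_surjective K) fun k hk => by
      ext
      simpa using hψ k hk
  exact ⟨Group.fg_of_finiteIndex (K.map (QuotientGroup.mk' L)), hva.of_finiteIndex⟩

theorem ResiduallyFinite.exists_normal_finiteIndex_separating {G : Type*} [Group G]
    (hG : ResiduallyFinite G) {S : Set G} (hS : S.Finite) :
    ∃ M : Subgroup G, M.Normal ∧ M.FiniteIndex ∧ ∀ s ∈ S, s ∈ M → s = 1 := by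
  have : ∀ s : ↥(S \ {1}), ∃ N : Subgroup G, N.Normal ∧ N.FiniteIndex ∧ (s : G) ∉ N :=
    fun s => hG s s.2.2
  choose N hNn hNi hN using this
  have : Finite ↥(S \ {1}) := hS.sdiff.to_subtype
  refine ⟨⨅ s, N s, normal_iInf_normal hNn, finiteIndex_iInf hNi, fun s hs hsM => ?_⟩
  by_contra hs1
  exact hN ⟨s, hs, hs1⟩ (iInf_le N _ hsM)

theorem Subgroup.finite_inf_of_inf_eq_bot {G : Type*} [Group G] {H A L : Subgroup G}
    (hHL : H ⊓ L = ⊥) (hidx : H.relIndex A ≠ 0) : Finite ↥(A ⊓ L) := by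
  refine Nat.finite_of_card_ne_zero ?_
  have hbot : H ⊓ (A ⊓ L) = ⊥ := eq_bot_iff.mpr fun g hg => hHL ▸ ⟨hg.1, hg.2.2⟩
  rw [← relIndex_bot_left, ← hbot, inf_relIndex_right]
  exact mt (relIndex_eq_zero_of_le_right inf_le_left) hidx

namespace Subgroup

variable {G : Type*} [Group G] {H K : Subgroup G}

def normalCoreKer (ρ : K →* G) : Subgroup G :=
  (ρ.ker.map K.subtype).normalCore

instance (ρ : K →* G) : (normalCoreKer ρ).Normal :=
  normalCore_normal _

theorem inf_normalCoreKer_eq_bot (hHK : H ≤ K) {ρ : K →* G}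
    (hρ : ∀ (h : G) (hh : h ∈ H), ρ ⟨h, hHK hh⟩ = h) : H ⊓ normalCoreKer ρ = ⊥ := by
  refine eq_bot_iff.mpr fun h ⟨hH, hL⟩ => ?_
  obtain ⟨k, hk, rfl⟩ := normalCore_le _ hL
  change (k : G) = 1
  rw [← hρ k hH]
  exact hk

noncomputable def conjNormalCore (K : Subgroup G) (g : G) : K.normalCore →* K :=
  ((MulAut.conj g⁻¹).toMonoidHom.comp K.normalCore.subtype).codRestrict K fun k => k.2 g⁻¹

noncomputable def conjCoordinates (ρ : K →* G) (hρ : ∀ k, ρ k ∈ H) :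
    K.normalCore →* (G ⧸ K → H) :=
  MonoidHom.pi fun q => (ρ.codRestrict H hρ).comp (conjNormalCore K q.out)

theorem mem_normalCoreKer_of_conjCoordinates_eq_one {ρ : K →* G} (hρ : ∀ k, ρ k ∈ H)
    {k : K.normalCore} (hk : conjCoordinates ρ hρ k = 1) : (k : G) ∈ normalCoreKer ρ := by
  intro b
  obtain ⟨c, hc⟩ := QuotientGroup.mk_out_eq_mul K b⁻¹
  set x := conjNormalCore K (QuotientGroup.mk b⁻¹ : G ⧸ K).out k
  have hx : ρ x = 1 := congrArg Subtype.val (congrFun hk (QuotientGroup.mk b⁻¹ : G ⧸ K))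
  -- `b k b⁻¹ = c x c⁻¹`, as the chosen representative of `b⁻¹ K` is `b⁻¹ c`
  refine ⟨c * x * c⁻¹, by simp [hx], ?_⟩
  simp [x, conjNormalCore, hc, mul_assoc]

theorem fg_virtuallyAbelian_quotient_normalCoreKer_inf [K.FiniteIndex] [Group.FG H]
    (hH : VirtuallyAbelian H) {ρ : K →* G} (hρ : ∀ k, ρ k ∈ H) (M : Subgroup G) [M.Normal]
    [M.FiniteIndex] :
    Group.FG (G ⧸ (normalCoreKer ρ ⊓ M)) ∧ VirtuallyAbelian (G ⧸ (normalCoreKer ρ ⊓ M)) :=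
  QuotientGroup.fg_virtuallyAbelian_of_ker_le hH.pi _ (K.normalCore ⊓ M)
    ((conjCoordinates ρ hρ).comp (inclusion inf_le_left)) fun k hk =>
      ⟨mem_normalCoreKer_of_conjCoordinates_eq_one hρ hk, k.2.2⟩

end Subgroup

theorem exists_epimorphism_to_virtuallyAbelian_injective_on_overgroup_general {G : Type u} [Group G]
    (hG : ResiduallyFinite G) (H A : Subgroup G)
    (hvr : IsVirtualRetract H) (hfg : H.FG) (hva : VirtuallyAbelian ↥H)
    (hidx : H.relIndex A ≠ 0) :
    ∃ (P : Type u) (_ : Group P), Group.FG P ∧ VirtuallyAbelian P ∧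
      ∃ φ : G →* P, Function.Surjective φ ∧ Set.InjOn φ (A : Set G) := by
  obtain ⟨K, hHK, hK, ρ, hρH, hρid⟩ := hvr
  have : Group.FG H := (Group.fg_iff_subgroup_fg H).mpr hfg
  have hfin : (A ⊓ normalCoreKer ρ : Set G).Finite := Set.finite_coe_iff.mp <|
    finite_inf_of_inf_eq_bot (inf_normalCoreKer_eq_bot hHK hρid) hidx
  obtain ⟨M, hMn, hMi, hM⟩ := hG.exists_normal_finiteIndex_separating hfin
  obtain ⟨hPfg, hPva⟩ := fg_virtuallyAbelian_quotient_normalCoreKer_inf hva hρH M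
  refine ⟨_, _, hPfg, hPva, QuotientGroup.mk' _, QuotientGroup.mk'_surjective _,
    (Set.injOn_iff_map_eq_one _ A).mpr fun a ha h1 => ?_⟩
  obtain ⟨haL, haM⟩ := (QuotientGroup.eq_one_iff a).mp h1
  exact hM a ⟨ha, haL⟩ haM

/-- Lemma 4.1: if `G` is residually finite, `H ≤vr G` is finitely generated virtually abelian
and `H ≤ A` with `|A : H| < ∞`, then there is a finitely generated virtually abelian group `P`
and an epimorphism `φ : G → P` injective on `A`. -/
theorem exists_epimorphism_to_virtuallyAbelian_injective_on_overgroup {G : Type u} [Group G]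
    (hG : ResiduallyFinite G) (H A : Subgroup G)
    (hvr : IsVirtualRetract H) (hfg : H.FG) (hva : VirtuallyAbelian ↥H)
    (hHA : H ≤ A) (hidx : H.relIndex A ≠ 0) :
    ∃ (P : Type u) (_ : Group P), Group.FG P ∧ VirtuallyAbelian P ∧
      ∃ φ : G →* P, Function.Surjective φ ∧ Set.InjOn φ (A : Set G) :=
  exists_epimorphism_to_virtuallyAbelian_injective_on_overgroup_general hG H A hvr hfg hva hidx
end

section
/- If P is a finitely generated virtually abelian group, then every subgroup Q of P is a virtual retract of P. -/
/-!
Pass to a normal, torsion-free, abelian subgroup `B` of finite index, so that `B ≅ ℤⁿ` contains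
`A = Q ∩ B`. The Smith normal form gives an endomorphism of `B` with image in `A` that is
multiplication by some `D ≠ 0` on `A`; summing its conjugates over the finite image of `Q` in
`Aut B` makes it `Q`-equivariant, and multiplication by `k = |image| * D` on `A`. Its kernel `N` is
normalized by `Q`, meets `Q` trivially because `B` is torsion-free, and `QN` contains `B^k`, which
has finite index. The retraction is `QN → QN ⧸ N ≅ Q`.
-/

open scoped IsMulCommutative

structure LinearMap.IsScaledProjection {R M : Type*} [CommRing R] [AddCommGroup M] [Module R M]
    (N : Submodule R M) (D : R) (p : M →ₗ[R] M) : Prop where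
  apply_mem : ∀ m, p m ∈ N
  apply_of_mem : ∀ n ∈ N, p n = D • n

theorem Submodule.exists_isScaledProjection {R M : Type*} [CommRing R] [IsDomain R]
    [IsPrincipalIdealRing R] [AddCommGroup M] [Module R M] [Module.Free R M] [Module.Finite R M]
    (N : Submodule R M) : ∃ D : R, D ≠ 0 ∧ ∃ p : M →ₗ[R] M, p.IsScaledProjection N D := by
  obtain ⟨n, snf⟩ := N.smithNormalForm (Module.Free.chooseBasis R M)
  have ha (i : Fin n) : snf.a i ≠ 0 := by
    intro h
    apply snf.bN.ne_zero i
    ext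
    simp [snf.snf i, h]
  -- `bN i = a i • bM (f i)`; sending `bM (f i)` to `c i • bN i` scales `bN i` by `c i * a i = ∏ a`.
  let c (i : Fin n) : R := ∏ j ∈ Finset.univ.erase i, snf.a j
  let p : M →ₗ[R] M := ∑ i, c i • (snf.bM.coord (snf.f i)).smulRight (snf.bN i : M)
  refine ⟨∏ i, snf.a i, Finset.prod_ne_zero_iff.2 fun i _ => ha i, p, ⟨fun m => ?_, ?_⟩⟩
  · rw [LinearMap.sum_apply]
    exact N.sum_mem fun i _ => N.smul_mem _ (N.smul_mem _ (snf.bN i).2)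
  · suffices p ∘ₗ N.subtype = (∏ i, snf.a i) • N.subtype from fun x hx =>
      LinearMap.congr_fun this ⟨x, hx⟩
    refine snf.bN.ext fun i => ?_
    have hc : c i * snf.a i = ∏ j, snf.a j := Finset.prod_erase_mul _ _ (Finset.mem_univ i)
    simp [p, snf.snf, Finsupp.single_apply, ← hc, smul_smul, mul_assoc]

namespace LinearMap

variable {R M : Type*} [CommRing R] [AddCommGroup M] [Module R M]

def sumConj (H : Subgroup (M ≃ₗ[R] M)) [Fintype H] (p : M →ₗ[R] M) : M →ₗ[R] M :=
  ∑ h : H, (h : M ≃ₗ[R] M).toLinearMap ∘ₗ p ∘ₗ (h : M ≃ₗ[R] M).symm.toLinearMap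

variable {H : Subgroup (M ≃ₗ[R] M)} [Fintype H]

theorem sumConj_apply (p : M →ₗ[R] M) (m : M) :
    sumConj H p m = ∑ h : H, (h : M ≃ₗ[R] M) (p ((h : M ≃ₗ[R] M).symm m)) := by
  simp [sumConj]

theorem sumConj_apply_apply (p : M →ₗ[R] M) {g : M ≃ₗ[R] M} (hg : g ∈ H) (m : M) :
    sumConj H p (g m) = g (sumConj H p m) := by
  rw [sumConj_apply, sumConj_apply, map_sum]
  refine Fintype.sum_bijective (⟨g, hg⟩⁻¹ * ·) (Group.mulLeft_bijective _) _ _ fun h => ?_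
  simp only [Subgroup.coe_mul, InvMemClass.coe_inv, LinearEquiv.mul_apply, LinearEquiv.coe_inv,
    LinearEquiv.apply_symm_apply, EmbeddingLike.apply_eq_iff_eq]
  rfl

theorem IsScaledProjection.sumConj {N : Submodule R M} {D : R} {p : M →ₗ[R] M}
    (hp : p.IsScaledProjection N D) (hN : ∀ h ∈ H, ∀ n ∈ N, h n ∈ N) :
    (sumConj H p).IsScaledProjection N (Fintype.card H * D) where
  apply_mem m := by
    rw [sumConj_apply]
    exact N.sum_mem fun h _ => hN h h.2 _ (hp.apply_mem _)
  apply_of_mem n hn := by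
    have hsymm (h : H) : (h : M ≃ₗ[R] M).symm n ∈ N := hN _ (inv_mem h.2) n hn
    simp [sumConj_apply, hp.apply_of_mem _ (hsymm _), mul_smul, Nat.cast_smul_eq_nsmul]

end LinearMap

theorem Submodule.exists_equivariant_isScaledProjection {R M : Type*} [CommRing R] [IsDomain R]
    [IsPrincipalIdealRing R] [CharZero R] [AddCommGroup M] [Module R M] [Module.Free R M]
    [Module.Finite R M] (N : Submodule R M) (H : Subgroup (M ≃ₗ[R] M)) [Finite H]
    (hN : ∀ h ∈ H, ∀ n ∈ N, h n ∈ N) :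
    ∃ k : R, k ≠ 0 ∧ ∃ ψ : M →ₗ[R] M,
      ψ.IsScaledProjection N k ∧ ∀ h ∈ H, ∀ m, ψ (h m) = h (ψ m) := by
  have := Fintype.ofFinite H
  obtain ⟨D, hD, p, hp⟩ := N.exists_isScaledProjection
  exact ⟨Fintype.card H * D, mul_ne_zero (Nat.cast_ne_zero.2 Fintype.card_ne_zero) hD,
    LinearMap.sumConj H p, hp.sumConj hN, fun h hh => LinearMap.sumConj_apply_apply p hh⟩

theorem Subgroup.finiteIndex_range_zpowGroupHom_of_fg (A : Type*) [CommGroup A] [Group.FG A]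
    {n : ℤ} (hn : n ≠ 0) : (zpowGroupHom (α := A) n).range.FiniteIndex := by
  have := finiteIndex_range_powMonoidHom_of_fg A (Int.natAbs_ne_zero.2 hn)
  refine Subgroup.finiteIndex_of_le (H := (powMonoidHom (α := A) n.natAbs).range) ?_
  rintro _ ⟨a, rfl⟩
  refine ⟨a ^ n.sign, ?_⟩
  simp [← zpow_mul, mul_comm, ← zpow_natCast]

theorem CommGroup.exists_finiteIndex_isMulTorsionFree (G : Type*) [CommGroup G] [Group.FG G] :
    ∃ H : Subgroup G, H.FiniteIndex ∧ IsMulTorsionFree H := by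
  obtain ⟨ι, j, _, _, p, hp, e, ⟨φ⟩⟩ := CommGroup.equiv_free_prod_prod_multiplicative_zmod G
  have (i : ι) : NeZero (p i ^ e i) := ⟨pow_ne_zero _ (hp i).ne_zero⟩
  let toFree := (MonoidHom.fst _ _).comp φ.toMonoidHom
  let toFinite := (MonoidHom.snd _ _).comp φ.toMonoidHom
  refine ⟨toFinite.ker, inferInstance,
    Function.Injective.isMulTorsionFree (toFree.comp toFinite.ker.subtype) ?_⟩
  rintro ⟨x, hx⟩ ⟨y, hy⟩ hxy
  rw [MonoidHom.mem_ker] at hx hy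
  exact Subtype.ext <| φ.injective <| Prod.ext hxy (hx.trans hy.symm)

open Subgroup in
theorem VirtuallyAbelian.exists_normal_isMulTorsionFree {P : Type*} [Group P] [Group.FG P]
    (hva : VirtuallyAbelian P) :
    ∃ B : Subgroup P, B.Normal ∧ B.FiniteIndex ∧ IsMulCommutative B ∧ IsMulTorsionFree B := by
  obtain ⟨A, hA, hcomm⟩ := hva
  have : IsMulCommutative A := .of_comm hcomm
  obtain ⟨T, hT, _⟩ := CommGroup.exists_finiteIndex_isMulTorsionFree A
  let B := T.map A.subtype
  have : B.FiniteIndex := by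
    constructor
    rw [index_map_subtype]
    exact mul_ne_zero hT.index_ne_zero hA.index_ne_zero
  have hcore : B.normalCore ≤ B := normalCore_le B
  have hBA : B ≤ A := map_subtype_le T
  refine ⟨B.normalCore, normalCore_normal B, inferInstance,
    .of_comm fun x y => Subtype.ext (setLike_mul_comm (hBA (hcore x.2)) (hBA (hcore y.2))), ?_⟩
  let e := (T.equivMapOfInjective A.subtype A.subtype_injective).symm
  exact Function.Injective.isMulTorsionFree (e.toMonoidHom.comp (inclusion hcore))
    (e.injective.comp (inclusion_injective hcore))

namespace Subgroup

variable {P : Type*} [Group P] (B : Subgroup P) [B.Normal] [IsMulCommutative B]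

def conjLinearEquiv : P →* (Additive B ≃ₗ[ℤ] Additive B) where
  toFun g := (MulEquiv.toAdditive (MulAut.conjNormal g)).toIntLinearEquiv
  map_one' := by ext; simp
  map_mul' g h := by ext; simp [mul_assoc]

theorem le_ker_conjLinearEquiv : B ≤ B.conjLinearEquiv.ker := by
  intro b hb
  rw [MonoidHom.mem_ker]
  ext x
  change b * x.toMul * b⁻¹ = x.toMul
  rw [setLike_mul_comm hb x.toMul.2, mul_inv_cancel_right]

end Subgroup

open Subgroup in
theorem isVirtualRetract_of_le_normalizer_s8 {G : Type*} [Group G] {H N : Subgroup G}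
    (hHN : H ≤ normalizer N) (hdisj : Disjoint H N) [(H ⊔ N).FiniteIndex] :
    IsVirtualRetract H := by
  have := normal_subgroupOf_of_le_normalizer hHN
  have := normal_subgroupOf_sup_of_le_normalizer hHN
  let e := (QuotientGroup.quotientInfEquivProdNormalizerQuotient H N hHN).symm.trans
    ((QuotientGroup.quotientMulEquivOfEq (subgroupOf_eq_bot.2 hdisj.symm)).trans
      QuotientGroup.quotientBot)
  refine ⟨H ⊔ N, le_sup_left, inferInstance,
    H.subtype.comp (e.toMonoidHom.comp (QuotientGroup.mk' _)), fun k => (e _).2, fun h hh => ?_⟩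
  have hmk : (QuotientGroup.quotientInfEquivProdNormalizerQuotient H N hHN).symm
      (inclusion (le_sup_left (b := N)) ⟨h, hh⟩ : _ ⧸ N.subgroupOf (H ⊔ N)) = (⟨h, hh⟩ : H) :=
    (MulEquiv.symm_apply_eq _).2 rfl
  change (e (inclusion (le_sup_left (b := N)) ⟨h, hh⟩ : _ ⧸ N.subgroupOf (H ⊔ N)) : G) = h
  simp only [e, MulEquiv.trans_apply, hmk]
  rfl

open Subgroup in
theorem isVirtualRetract_of_equivariant_pow_retraction {P : Type*} [Group P] {B : Subgroup P}
    [B.Normal] [B.FiniteIndex] [IsMulCommutative B] [IsMulTorsionFree B] [Group.FG B]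
    {Q : Subgroup P} {k : ℤ} (hk : k ≠ 0) (ψ : B →* B) (hψQ : ∀ b, (ψ b : P) ∈ Q)
    (hψpow : ∀ b : B, (b : P) ∈ Q → ψ b = b ^ k)
    (hψconj : ∀ q ∈ Q, ∀ b, ψ (MulAut.conjNormal q b) = MulAut.conjNormal q (ψ b)) :
    IsVirtualRetract Q := by
  let N := ψ.ker.map B.subtype
  have hpow : (zpowGroupHom k).range.map B.subtype ≤ Q ⊔ N := by
    rintro _ ⟨_, ⟨b, rfl⟩, rfl⟩
    have hker : (ψ b)⁻¹ * b ^ k ∈ ψ.ker := by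
      simp [hψpow _ (hψQ b), ← map_zpow]
    have : b ^ k = ψ b * ((ψ b)⁻¹ * b ^ k) := (mul_inv_cancel_left _ _).symm
    rw [zpowGroupHom_apply, this, coe_subtype, coe_mul]
    exact mul_mem_sup (hψQ b) ⟨_, hker, rfl⟩
  have : ((zpowGroupHom k).range.map B.subtype).FiniteIndex := by
    constructor
    rw [index_map_subtype]
    exact mul_ne_zero (finiteIndex_range_zpowGroupHom_of_fg B hk).index_ne_zero
      FiniteIndex.index_ne_zero
  have : (Q ⊔ N).FiniteIndex := finiteIndex_of_le hpow
  refine isVirtualRetract_of_le_normalizer_s8 (N := N) ?_ ?_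
  · rw [le_normalizer_iff]
    rintro q hq _ ⟨b, hb, rfl⟩
    refine ⟨MulAut.conjNormal q b, ?_, MulAut.conjNormal_apply q b⟩
    rw [SetLike.mem_coe, MonoidHom.mem_ker] at hb ⊢
    rw [hψconj q hq, hb, map_one]
  · rw [disjoint_iff_inf_le]
    rintro _ ⟨hq, ⟨b, hb, rfl⟩⟩
    rw [SetLike.mem_coe, MonoidHom.mem_ker, hψpow b hq,
      IsMulTorsionFree.zpow_eq_one_iff_left hk] at hb
    simp [hb]

theorem isVirtualRetract_of_isMulTorsionFree {P : Type*} [Group P] (B : Subgroup P)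
    [B.Normal] [B.FiniteIndex] [IsMulCommutative B] [IsMulTorsionFree B] [Group.FG B]
    (Q : Subgroup P) : IsVirtualRetract Q := by
  let A : Submodule ℤ (Additive B) := (Q.subgroupOf B).toAddSubgroup.toIntSubmodule
  let H := Q.map B.conjLinearEquiv
  have : Finite B.conjLinearEquiv.range := by
    have := Subgroup.finiteIndex_of_le B.le_ker_conjLinearEquiv
    exact Finite.of_equiv _ (QuotientGroup.quotientKerEquivRange _).toEquiv
  have : Finite H := Set.Finite.subset (Set.toFinite _) (Subgroup.map_le_range _ Q)
  have hAH : ∀ h ∈ H, ∀ a ∈ A, h a ∈ A := by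
    rintro _ ⟨q, hq, rfl⟩ a ha
    exact Q.mul_mem (Q.mul_mem hq ha) (Q.inv_mem hq)
  obtain ⟨k, hk, ψ, hψ, hψH⟩ := A.exists_equivariant_isScaledProjection H hAH
  exact isVirtualRetract_of_equivariant_pow_retraction hk ψ.toAddMonoidHom.toMultiplicative
    (fun b => hψ.apply_mem _) (fun b hb => hψ.apply_of_mem _ hb)
    (fun q hq b => hψH _ ⟨q, hq, rfl⟩ _)

/-- Corollary 4.3: every subgroup of a finitely generated virtually abelian group is a
virtual retract. -/
theorem virtualRetract_of_subgroup_of_fg_virtuallyAbelian {P : Type*} [Group P]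
    (hfg : Group.FG P) (hva : VirtuallyAbelian P) (Q : Subgroup P) :
    IsVirtualRetract Q := by
  have := hfg
  obtain ⟨B, _, _, _, _⟩ := hva.exists_normal_isMulTorsionFree
  exact isVirtualRetract_of_isMulTorsionFree B Q
end

section
/- Let (X_i)_{i ∈ I} be a family of groups each of which has property (VRC). Then the restricted (finitary) direct product of the X_i — the subgroup of the direct product Π_{i ∈ I} X_i consisting of all elements whose set of non-identity coordinates is finite — has property (VRC). -/
/-- The restricted (finitary) direct product: the subgroup of `Π i, X i` consisting of all
elements with only finitely many non-identity coordinates. -/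
def restrictedDirectProduct {I : Type*} (X : I → Type*) [∀ i, Group (X i)] :
    Subgroup (∀ i, X i) where
  carrier := {f | {i | f i ≠ 1}.Finite}
  one_mem' := by simp
  mul_mem' := by
    intro f g hf hg
    apply (hf.union hg).subset
    intro i hi
    simp only [Set.mem_setOf_eq, Set.mem_union] at *
    by_contra hc
    push_neg at hc
    exact hi (by rw [Pi.mul_apply, hc.1, hc.2, one_mul])
  inv_mem' := by
    intro f hf
    simpa using hf

/-! If some coordinate `g i` has infinite order, the projection to `X i` is injective on `⟨g⟩`,
so a virtual retraction onto `⟨g i⟩` in `X i` pulls back to one onto `⟨g⟩`. Otherwise every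
`⟨g i⟩` is finite and trivial for almost all `i`; retracting coordinatewise shows that the finite
subgroup `∏ ⟨g i⟩` is a virtual retract, and a finite-index subgroup of a virtual retract, such as
`⟨g⟩`, is again one. -/

open Subgroup

theorem Subgroup.finiteIndex_comap {G G' : Type*} [Group G] [Group G'] (f : G →* G')
    (K : Subgroup G') [K.FiniteIndex] : (K.comap f).FiniteIndex :=
  ⟨by simpa using relIndex_comap_ne_zero f (K := ⊤) (by simpa using K.index_ne_zero_of_finite)⟩

theorem Subgroup.finiteIndex_pi {ι : Type*} {X : ι → Type*} [∀ i, Group (X i)]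
    {K : ∀ i, Subgroup (X i)} [∀ i, (K i).FiniteIndex] (hK : {i | K i ≠ ⊤}.Finite) :
    (pi Set.univ K).FiniteIndex := by
  have := finiteIndex_iInf' (s := hK.toFinset)
    (fun i => (K i).comap (Pi.evalMonoidHom X i)) fun i _ => finiteIndex_comap _ (K i)
  refine finiteIndex_of_le (H := ⨅ i ∈ hK.toFinset, (K i).comap (Pi.evalMonoidHom X i))
    fun f hf i _ => ?_
  by_cases hi : K i = ⊤
  · simp [hi]
  · simp only [mem_iInf] at hf
    exact hf i (hK.mem_toFinset.2 hi)

theorem Set.Finite.pi_univ_of_subsingleton {ι : Type*} {X : ι → Type*} {t : ∀ i, Set (X i)}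
    (ht : ∀ i, (t i).Finite) (hsub : {i | ¬(t i).Subsingleton}.Finite) :
    (Set.univ.pi t).Finite := by
  refine ((Set.Finite.pi fun i : hsub.toFinset => ht i).subset ?_).of_finite_image
    (f := fun f (i : hsub.toFinset) => f i) ?_
  · rintro _ ⟨f, hf, rfl⟩ i -
    exact hf i trivial
  · intro f hf f' hf' hff
    funext i
    by_cases hi : i ∈ hsub.toFinset
    · exact congrFun hff ⟨i, hi⟩
    · exact of_not_not (fun h => hi (hsub.mem_toFinset.2 h)) (hf i trivial) (hf' i trivial)

section VirtualRetract

variable {G : Type*} [Group G]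

theorem IsVirtualRetract.of_le {H L : Subgroup G} (hL : IsVirtualRetract L) (hHL : H ≤ L)
    (hH : H.relIndex L ≠ 0) : IsVirtualRetract H := by
  obtain ⟨K, hLK, hK, ρ, hρL, hρ⟩ := hL
  have hle : (H.comap ρ).map K.subtype ≤ K := map_subtype_le _
  refine ⟨(H.comap ρ).map K.subtype, fun h hh => ⟨⟨h, hLK (hHL hh)⟩, ?_, rfl⟩, ⟨?_⟩,
    ρ.comp (inclusion hle), ?_, fun h hh => hρ h (hHL hh)⟩
  · simpa [hρ h (hHL hh)] using hh
  · rw [index_map_subtype, index_comap]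
    refine mul_ne_zero (fun h0 => hH ?_) hK.index_ne_zero
    exact relIndex_eq_zero_of_le_right (by rintro _ ⟨k, rfl⟩; exact hρL k) h0
  · rintro ⟨_, k, hk, rfl⟩
    exact hk

theorem IsVirtualRetract.of_map_of_injOn {G' : Type*} [Group G'] {H : Subgroup G} (φ : G →* G')
    (hφ : Set.InjOn φ H) (hH : IsVirtualRetract (H.map φ)) : IsVirtualRetract H := by
  obtain ⟨K, hHK, hK, ρ, hρH, hρ⟩ := hH
  have hinj : Function.Injective (φ.domRestrict H) := fun x y hxy => Subtype.ext (hφ x.2 y.2 hxy)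
  let e : H ≃* (φ.domRestrict H).range := MonoidHom.ofInjective hinj
  let σ : K.comap φ →* (φ.domRestrict H).range :=
    (ρ.comp (φ.subgroupComap K)).codRestrict _ fun k => by
      rw [φ.domRestrict_range]; exact hρH _
  refine ⟨K.comap φ, fun h hh => hHK (mem_map_of_mem φ hh), finiteIndex_comap φ K,
    H.subtype.comp (e.symm.toMonoidHom.comp σ), fun k => (e.symm _).2, fun h hh => ?_⟩
  have : σ ⟨h, hHK (mem_map_of_mem φ hh)⟩ = e ⟨h, hh⟩ := Subtype.ext (hρ _ (mem_map_of_mem φ hh))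
  simp [this]

theorem isVirtualRetract_zpowers_of_map {G' : Type*} [Group G'] (φ : G →* G') {g : G}
    (hg : ¬IsOfFinOrder (φ g)) (h : IsVirtualRetract (zpowers (φ g))) :
    IsVirtualRetract (zpowers g) := by
  refine IsVirtualRetract.of_map_of_injOn φ ?_ (by rwa [φ.map_zpowers])
  rintro _ ⟨m, rfl⟩ _ ⟨n, rfl⟩ hmn
  simp only [map_zpow] at hmn
  rw [injective_zpow_iff_not_isOfFinOrder.2 hg hmn]

end VirtualRetract

section RestrictedDirectProduct

variable {I : Type*} {X : I → Type*} [∀ i, Group (X i)]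

theorem isVirtualRetract_comap_subtype_pi {A : ∀ i, Subgroup (X i)}
    (hA : ∀ i, IsVirtualRetract (A i)) (hfin : {i | A i ≠ ⊥}.Finite) :
    IsVirtualRetract ((pi Set.univ A).comap (restrictedDirectProduct X).subtype) := by
  -- Trivial factors get the retraction `⊤ → ⊥`, so that only finitely many `K i` are proper.
  have hr : ∀ i, ∃ (K : Subgroup (X i)) (hAK : A i ≤ K), K.FiniteIndex ∧ (A i = ⊥ → K = ⊤) ∧
      ∃ ρ : K →* X i, (∀ k, ρ k ∈ A i) ∧ ∀ a (ha : a ∈ A i), ρ ⟨a, hAK ha⟩ = a := by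
    intro i
    by_cases hi : A i = ⊥
    · refine ⟨⊤, le_top, inferInstance, fun _ => rfl, 1, fun _ => one_mem _, fun a ha => ?_⟩
      rw [hi, mem_bot] at ha
      simp [ha]
    · obtain ⟨K, hAK, hK, ρ, hρA, hρ⟩ := hA i
      exact ⟨K, hAK, hK, fun h => absurd h hi, ρ, hρA, hρ⟩
  choose K hAK hK hKtop ρ hρA hρ using hr
  let P := restrictedDirectProduct X
  let K₀ := (pi Set.univ K).comap P.subtype
  have : (pi Set.univ K).FiniteIndex :=
    finiteIndex_pi (hfin.subset fun i hKi hAi => hKi (hKtop i hAi))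
  let ψ : K₀ →* ∀ i, X i := MonoidHom.pi fun i => (ρ i).comp
    (((Pi.evalMonoidHom X i).comp (P.subtype.comp K₀.subtype)).codRestrict (K i)
      fun k => k.2 i trivial)
  have hψA : ∀ k i, ψ k i ∈ A i := fun k i => hρA i _
  have hψP : ∀ k, ψ k ∈ P := fun k =>
    hfin.subset fun i hi hAi => hi (by simpa [hAi] using hψA k i)
  refine ⟨K₀, fun f hf i _ => hAK i (hf i trivial), finiteIndex_comap _ _,
    ψ.codRestrict P hψP, fun k i _ => hψA k i,
    fun f hf => Subtype.ext (funext fun i => hρ i _ (hf i trivial))⟩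

theorem finite_comap_subtype_pi {A : ∀ i, Subgroup (X i)} [∀ i, Finite (A i)]
    (hfin : {i | A i ≠ ⊥}.Finite) :
    Finite ((pi Set.univ A).comap (restrictedDirectProduct X).subtype) := by
  have hpi : (Set.univ.pi fun i => (A i : Set (X i))).Finite := by
    refine Set.Finite.pi_univ_of_subsingleton (fun i => Set.toFinite _) (hfin.subset ?_)
    intro i hi hAi
    simp [hAi] at hi
  have := hpi.to_subtype
  exact Finite.of_injective (fun f => (⟨f.1.1, f.2⟩ : Set.univ.pi _))
    fun f f' h => by simpa [Subtype.ext_iff] using h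

end RestrictedDirectProduct

/-- Lemma 5.3(b): the restricted direct product of a family of groups with (VRC)
has (VRC). -/
theorem VRC_restrictedDirectProduct {I : Type*} (X : I → Type*) [∀ i, Group (X i)]
    (h : ∀ i, VRC (X i)) : VRC ↥(restrictedDirectProduct X) := by
  intro g
  by_cases hg : ∀ i, IsOfFinOrder ((g : ∀ i, X i) i)
  · have hfin : {i | zpowers ((g : ∀ i, X i) i) ≠ ⊥}.Finite := by
      simp only [ne_eq, zpowers_eq_bot]
      exact g.2
    have := fun i => (hg i).finite_zpowers.to_subtype
    have := finite_comap_subtype_pi hfin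
    exact (isVirtualRetract_comap_subtype_pi (fun i => h i _) hfin).of_le
      (zpowers_le.2 fun i _ => mem_zpowers _) index_ne_zero_of_finite
  · obtain ⟨i, hi⟩ := not_forall.1 hg
    exact isVirtualRetract_zpowers_of_map
      ((Pi.evalMonoidHom X i).comp (restrictedDirectProduct X).subtype) hi (h i _)
end

section
/- Let X be a finitely generated virtually abelian group and let Y be a group with property (LR). Then the direct product X × Y has property (LR). -/
/-- Property (LR): every finitely generated subgroup is a virtual retract. -/
def LR (G : Type*) [Group G] : Prop :=
  ∀ H : Subgroup G, H.FG → IsVirtualRetract H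

/-!
A subgroup `H` is a virtual retract iff some subgroup `N` normalised by `H` meets it trivially
and `H ⊔ N` has finite index. For a finitely generated `H ≤ X × Y`, property (LR) of `Y` gives
such a complement `R` of the projection `Q = π_Y H`. In `X`, the subgroup `N = {x | (x, 1) ∈ H}`
is normalised by `P = π_X H`, and we find a `P`-invariant `M` with `N ⊓ M = ⊥` and `N ⊔ M` of
finite index; then `M × R` is a complement of `H`. To find `M`, pass to a normal, finite-index,
torsion-free abelian `B ≤ X`, on which `P` acts through a finite group `Γ`. Smith normal form
gives an endomorphism of `B` into `A = N ⊓ B` that is an `n`-th power map on `A`; the product of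
its `Γ`-conjugates is `Γ`-equivariant with the same property, and its kernel is `M`.
-/

namespace Subgroup

variable {G : Type*} [Group G]

theorem le_normalizer_of_conj_mem {P M : Subgroup G} (h : ∀ x ∈ P, ∀ m ∈ M, x * m * x⁻¹ ∈ M) :
    P ≤ normalizer M :=
  fun x hx m ↦ ⟨h x hx m, fun hm ↦ by simpa [mul_assoc] using h x⁻¹ (inv_mem hx) _ hm⟩

theorem prod_normalizer_le_normalizer_prod {G' : Type*} [Group G'] (M : Subgroup G)
    (R : Subgroup G') :
    (normalizer (M : Set G)).prod (normalizer (R : Set G')) ≤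
      normalizer (M.prod R : Set (G × G')) :=
  fun g hg x ↦ by
    rw [SetLike.mem_coe, SetLike.mem_coe, mem_prod, mem_prod]
    exact and_congr (hg.1 x.1) (hg.2 x.2)

theorem map_fst_le_normalizer_comap_inl {X Y : Type*} [Group X] [Group Y]
    (H : Subgroup (X × Y)) :
    H.map (MonoidHom.fst X Y) ≤ normalizer (H.comap (MonoidHom.inl X Y) : Set X) := by
  refine le_normalizer_of_conj_mem ?_
  rintro _ ⟨h, hh, rfl⟩ n hn
  have : MonoidHom.inl X Y (h.1 * n * h.1⁻¹) = h * MonoidHom.inl X Y n * h⁻¹ := by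
    ext <;> simp
  exact (congrArg (· ∈ H) this).mpr (mul_mem (mul_mem hh hn) (inv_mem hh))

open scoped Classical in
theorem FG.map {G' : Type*} [Group G'] {H : Subgroup G} (hH : H.FG) (f : G →* G') :
    (H.map f).FG := by
  obtain ⟨S, rfl⟩ := hH
  exact ⟨S.image f, by rw [Finset.coe_image, MonoidHom.map_closure]⟩

theorem finiteIndex_map_subtype_s12 {H : Subgroup G} [H.FiniteIndex] (K : Subgroup H)
    [K.FiniteIndex] : (K.map H.subtype).FiniteIndex :=
  ⟨by rw [index_map_subtype]; exact mul_ne_zero FiniteIndex.index_ne_zero FiniteIndex.index_ne_zero⟩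

theorem index_eq_relIndex_of_sup_eq_top {T K : Subgroup G} [K.Normal] (h : T ⊔ K = ⊤) :
    T.index = T.relIndex K := by
  have : MulAction.IsPretransitive K (G ⧸ T) := by
    refine (MulAction.isPretransitive_iff_base ((1 : G) : G ⧸ T)).mpr fun x ↦ ?_
    obtain ⟨g, rfl⟩ := QuotientGroup.mk_surjective x
    have hg : g ∈ ((K ⊔ T : Subgroup G) : Set G) := by
      rw [sup_comm, h]
      trivial
    rw [normal_mul] at hg
    obtain ⟨k, hk, t, ht, rfl⟩ := hg
    exact ⟨⟨k, hk⟩, QuotientGroup.eq.mpr (by simpa using ht)⟩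
  rw [relIndex, index, ← MulAction.index_stabilizer_of_transitive K ((1 : G) : G ⧸ T)]
  congr 1
  ext k
  change ((k * 1 : G) : G ⧸ T) = ((1 : G) : G ⧸ T) ↔ (k : G) ∈ T
  rw [QuotientGroup.eq, mul_one, mul_one, inv_mem_iff]

theorem relIndex_sup_right_eq_relIndex (T K : Subgroup G) [K.Normal] :
    T.relIndex (T ⊔ K) = T.relIndex K := by
  rw [← relIndex_subgroupOf (le_sup_right : K ≤ T ⊔ K)]
  exact index_eq_relIndex_of_sup_eq_top (codisjoint_subgroupOf_sup T K).eq_top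

theorem finiteIndex_of_comap_inl_of_map_snd {X Y : Type*} [Group X] [Group Y]
    (T : Subgroup (X × Y)) [(T.comap (MonoidHom.inl X Y)).FiniteIndex]
    [(T.map (MonoidHom.snd X Y)).FiniteIndex] : T.FiniteIndex := by
  have hker : (MonoidHom.snd X Y).ker = (MonoidHom.inl X Y).range := by
    ext ⟨x, y⟩
    simp [mem_prod, eq_comm]
  have hmap : (T ⊔ (MonoidHom.snd X Y).ker).index = (T.map (MonoidHom.snd X Y)).index := by
    rw [index_map, (MonoidHom.snd X Y).range_eq_top_of_surjective Prod.snd_surjective, index_top,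
      mul_one]
  constructor
  rw [← relIndex_mul_index (le_sup_left : T ≤ T ⊔ (MonoidHom.snd X Y).ker),
    relIndex_sup_right_eq_relIndex, hmap, hker, ← index_comap]
  exact mul_ne_zero FiniteIndex.index_ne_zero FiniteIndex.index_ne_zero

theorem characteristic_range_powMonoidHom {A : Type*} [CommGroup A] (n : ℕ) :
    (powMonoidHom n : A →* A).range.Characteristic :=
  characteristic_iff_map_le.mpr fun φ ↦ by
    rintro _ ⟨_, ⟨a, rfl⟩, rfl⟩
    exact ⟨φ a, (map_pow φ a n).symm⟩

end Subgroup

section VirtualRetract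

variable {G : Type*} [Group G]

theorem isVirtualRetract_of_complement {H N : Subgroup G} (hHN : H ≤ Subgroup.normalizer N)
    (hHN' : H ⊓ N = ⊥) [(H ⊔ N).FiniteIndex] : IsVirtualRetract H := by
  have := Subgroup.normal_subgroupOf_sup_of_le_normalizer hHN
  let φ : H →* (H ⊔ N : Subgroup G) ⧸ N.subgroupOf (H ⊔ N) :=
    (QuotientGroup.mk' _).comp (Subgroup.inclusion le_sup_left)
  have hφ : Function.Bijective φ := by
    refine ⟨(injective_iff_map_eq_one φ).mpr fun h hh ↦ ?_, fun k ↦ ?_⟩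
    · have : (h : G) ∈ H ⊓ N := ⟨h.2, (QuotientGroup.eq_one_iff (Subgroup.inclusion _ h)).mp hh⟩
      rw [hHN', Subgroup.mem_bot] at this
      exact Subtype.ext this
    · obtain ⟨⟨k, hk⟩, rfl⟩ := QuotientGroup.mk_surjective k
      rw [← SetLike.mem_coe, Subgroup.coe_mul_of_left_le_normalizer_right H N hHN] at hk
      obtain ⟨h, hh, n, hn, rfl⟩ := hk
      refine ⟨⟨h, hh⟩, QuotientGroup.eq.mpr ?_⟩
      simpa [Subgroup.mem_subgroupOf] using hn
  let e := MulEquiv.ofBijective φ hφ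
  exact ⟨H ⊔ N, le_sup_left, inferInstance,
    H.subtype.comp (e.symm.toMonoidHom.comp (QuotientGroup.mk' _)), fun k ↦ (e.symm _).2,
    fun h hh ↦ congrArg Subtype.val (e.symm_apply_apply ⟨h, hh⟩)⟩

theorem IsVirtualRetract.exists_complement {H : Subgroup G} (hH : IsVirtualRetract H) :
    ∃ N : Subgroup G, H ≤ Subgroup.normalizer N ∧ H ⊓ N = ⊥ ∧ (H ⊔ N).FiniteIndex := by
  obtain ⟨K, hHK, hK, ρ, hρH, hρ⟩ := hH
  refine ⟨ρ.ker.map K.subtype, fun h hh ↦ ?_, eq_bot_iff.mpr fun g hg ↦ ?_, ?_⟩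
  · have : (⟨h, hHK hh⟩ : K) ∈ Subgroup.normalizer (ρ.ker : Set K) := by
      rw [Subgroup.normalizer_eq_top]
      trivial
    exact Subgroup.le_normalizer_map K.subtype (Subgroup.mem_map_of_mem _ this)
  · obtain ⟨hgH, k, hk, rfl⟩ := Subgroup.mem_inf.mp hg
    rw [Subgroup.mem_bot, Subgroup.coe_subtype, ← hρ k hgH]
    exact hk
  · refine Subgroup.finiteIndex_of_le (H := K) fun k hk ↦ ?_
    rw [← mul_inv_cancel_left (ρ ⟨k, hk⟩) k]
    refine Subgroup.mul_mem_sup (hρH _) ⟨⟨ρ ⟨k, hk⟩, hHK (hρH _)⟩⁻¹ * ⟨k, hk⟩, ?_, rfl⟩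
    rw [SetLike.mem_coe, MonoidHom.mem_ker, map_mul, map_inv, hρ _ (hρH _), inv_mul_cancel]

theorem isVirtualRetract_iff_s12 {H : Subgroup G} :
    IsVirtualRetract H ↔
      ∃ N : Subgroup G, H ≤ Subgroup.normalizer N ∧ H ⊓ N = ⊥ ∧ (H ⊔ N).FiniteIndex :=
  ⟨IsVirtualRetract.exists_complement,
    fun ⟨_, hHN, hHN', _⟩ ↦ isVirtualRetract_of_complement hHN hHN'⟩

theorem isVirtualRetract_of_prod_complement {X Y : Type*} [Group X] [Group Y]
    (H : Subgroup (X × Y)) {M : Subgroup X} {R : Subgroup Y}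
    (hM : H.map (MonoidHom.fst X Y) ≤ Subgroup.normalizer M)
    (hM' : H.comap (MonoidHom.inl X Y) ⊓ M = ⊥) [(H.comap (MonoidHom.inl X Y) ⊔ M).FiniteIndex]
    (hR : H.map (MonoidHom.snd X Y) ≤ Subgroup.normalizer R)
    (hR' : H.map (MonoidHom.snd X Y) ⊓ R = ⊥) [(H.map (MonoidHom.snd X Y) ⊔ R).FiniteIndex] :
    IsVirtualRetract H := by
  refine isVirtualRetract_iff_s12.mpr ⟨M.prod R,
    (Subgroup.le_prod_iff.mpr ⟨hM, hR⟩).trans (Subgroup.prod_normalizer_le_normalizer_prod M R),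
    eq_bot_iff.mpr fun g hg ↦ ?_, ?_⟩
  · obtain ⟨hgH, hgM, hgR⟩ := hg
    have hg₂ : g.2 ∈ H.map (MonoidHom.snd X Y) ⊓ R :=
      ⟨Subgroup.mem_map_of_mem (MonoidHom.snd X Y) hgH, hgR⟩
    rw [hR', Subgroup.mem_bot] at hg₂
    have hg₁ : g.1 ∈ H.comap (MonoidHom.inl X Y) ⊓ M := ⟨show (g.1, 1) ∈ H by rwa [← hg₂], hgM⟩
    rw [hM', Subgroup.mem_bot] at hg₁
    exact Subgroup.mem_bot.mpr (Prod.ext hg₁ hg₂)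
  · have : ((H ⊔ M.prod R).comap (MonoidHom.inl X Y)).FiniteIndex :=
      Subgroup.finiteIndex_of_le (H := H.comap (MonoidHom.inl X Y) ⊔ M) <|
        sup_le (Subgroup.comap_mono le_sup_left) fun m hm ↦ Subgroup.mem_sup_right ⟨hm, one_mem R⟩
    have : ((H ⊔ M.prod R).map (MonoidHom.snd X Y)).FiniteIndex :=
      Subgroup.finiteIndex_of_le (H := H.map (MonoidHom.snd X Y) ⊔ R) <| by
        rw [Subgroup.map_sup]
        exact sup_le_sup_left (fun r hr ↦ ⟨(1, r), ⟨one_mem M, hr⟩, rfl⟩) _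
    exact Subgroup.finiteIndex_of_comap_inl_of_map_snd _

end VirtualRetract

theorem Submodule.exists_smul_retraction {V : Type*} [AddCommGroup V] [Module.Free ℤ V]
    [Module.Finite ℤ V] (N : Submodule ℤ V) :
    ∃ n : ℕ, n ≠ 0 ∧ ∃ α : V →ₗ[ℤ] V, (∀ x, α x ∈ N) ∧ ∀ x ∈ N, α x = n • x := by
  obtain ⟨r, bM, bN, f, a, hsnf⟩ := N.smithNormalForm (Module.Free.chooseBasis ℤ V)
  have ha : ∀ i, a i ≠ 0 := fun i hai ↦
    bN.ne_zero i (Subtype.ext (by rw [hsnf i, hai, zero_smul, ZeroMemClass.coe_zero]))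
  set d := ∏ i, a i
  have hd : ∀ i, d • bM (f i) = (∏ k ∈ Finset.univ.erase i, a k) • (bN i : V) := fun i ↦ by
    rw [hsnf i, smul_smul, Finset.prod_erase_mul _ _ (Finset.mem_univ i)]
  let α₀ : V →ₗ[ℤ] V := bM.constr ℤ fun j ↦ if j ∈ Set.range f then d • bM j else 0
  have hα₀N : ∀ x, α₀ x ∈ N := fun x ↦ by
    rw [Module.Basis.constr_apply_fintype]
    refine N.sum_mem fun j _ ↦ N.smul_mem _ ?_
    split_ifs with hj
    · obtain ⟨i, rfl⟩ := hj
      rw [hd i]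
      exact N.smul_mem _ (bN i).2
    · exact N.zero_mem
  have hα₀ : α₀ ∘ₗ N.subtype = d • N.subtype := bN.ext fun i ↦ by
    simp only [LinearMap.comp_apply, Submodule.subtype_apply, LinearMap.smul_apply, hsnf i,
      map_smul, α₀, Module.Basis.constr_basis, Set.mem_range_self, if_true, smul_comm (a i) d]
  refine ⟨d.natAbs, Int.natAbs_ne_zero.mpr (Finset.prod_ne_zero_iff.mpr fun i _ ↦ ha i),
    d.sign • α₀, fun x ↦ N.smul_mem _ (hα₀N x), fun x hx ↦ ?_⟩
  have := LinearMap.congr_fun hα₀ ⟨x, hx⟩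
  simp only [LinearMap.comp_apply, Submodule.subtype_apply, LinearMap.smul_apply] at this
  rw [LinearMap.smul_apply, this, smul_smul, Int.sign_mul_self_eq_natAbs, natCast_zsmul]

namespace MonoidHom

variable {V : Type*} [CommGroup V] (Γ : Subgroup (MulAut V)) [Fintype Γ] (α : V →* V)

noncomputable def prodOfConjugates : V →* V :=
  ∏ τ : Γ, (τ : V ≃* V).toMonoidHom.comp (α.comp (τ⁻¹ : V ≃* V).toMonoidHom)

theorem prodOfConjugates_apply (v : V) :
    prodOfConjugates Γ α v = ∏ τ : Γ, (τ : MulAut V) (α ((τ : MulAut V)⁻¹ v)) := by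
  simp [prodOfConjugates]

theorem prodOfConjugates_map_smul {τ : MulAut V} (hτ : τ ∈ Γ) (v : V) :
    prodOfConjugates Γ α (τ v) = τ (prodOfConjugates Γ α v) := by
  simp only [prodOfConjugates_apply, map_prod]
  refine (Fintype.prod_equiv (Equiv.mulLeft ⟨τ, hτ⟩) _ _ fun ρ ↦ ?_).symm
  simp [mul_inv_rev, MulAut.mul_apply]

variable {Γ α} {A : Subgroup V}

theorem prodOfConjugates_mem (hA : ∀ τ ∈ Γ, ∀ a ∈ A, τ a ∈ A) (hαA : ∀ v, α v ∈ A) (v : V) :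
    prodOfConjugates Γ α v ∈ A := by
  rw [prodOfConjugates_apply]
  exact A.prod_mem fun τ _ ↦ hA τ τ.2 _ (hαA _)

theorem prodOfConjugates_eq_pow (hA : ∀ τ ∈ Γ, ∀ a ∈ A, τ a ∈ A) {n : ℕ}
    (hα : ∀ a ∈ A, α a = a ^ n) {a : V} (ha : a ∈ A) :
    prodOfConjugates Γ α a = a ^ (n * Fintype.card Γ) := by
  rw [prodOfConjugates_apply, pow_mul, ← Finset.card_univ, ← Finset.prod_const]
  refine Finset.prod_congr rfl fun τ _ ↦ ?_
  rw [hα _ (hA _ (inv_mem τ.2) a ha), map_pow, ← MulAut.mul_apply, mul_inv_cancel,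
    MulAut.one_apply]

end MonoidHom

namespace CommGroup

variable {V : Type*} [CommGroup V] [Group.FG V]

theorem exists_pow_retraction [IsMulTorsionFree V] (A : Subgroup V) :
    ∃ n : ℕ, n ≠ 0 ∧ ∃ α : V →* V, (∀ v, α v ∈ A) ∧ ∀ a ∈ A, α a = a ^ n := by
  have : Module.Finite ℤ (Additive V) := Module.Finite.iff_addGroup_fg.mpr inferInstance
  obtain ⟨n, hn, α, hαA, hα⟩ := A.toAddSubgroup.toIntSubmodule.exists_smul_retraction
  exact ⟨n, hn, MonoidHom.toAdditive.symm α.toAddMonoidHom, hαA, hα⟩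

theorem exists_invariant_complement [IsMulTorsionFree V] (Γ : Subgroup (MulAut V)) [Finite Γ]
    {A : Subgroup V} (hA : ∀ τ ∈ Γ, ∀ a ∈ A, τ a ∈ A) :
    ∃ M : Subgroup V, (∀ τ ∈ Γ, ∀ m ∈ M, τ m ∈ M) ∧ A ⊓ M = ⊥ ∧ (A ⊔ M).FiniteIndex := by
  have := Fintype.ofFinite Γ
  obtain ⟨n, hn, α, hαA, hα⟩ := exists_pow_retraction A
  set σ := MonoidHom.prodOfConjugates Γ α
  set k := n * Fintype.card Γ
  have hk : k ≠ 0 := mul_ne_zero hn Fintype.card_ne_zero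
  have hσA : ∀ v, σ v ∈ A := MonoidHom.prodOfConjugates_mem hA hαA
  have hσ : ∀ a ∈ A, σ a = a ^ k := fun a ↦ MonoidHom.prodOfConjugates_eq_pow hA hα
  refine ⟨σ.ker, fun τ hτ m hm ↦ ?_, ?_, ?_⟩
  · rw [MonoidHom.mem_ker, MonoidHom.prodOfConjugates_map_smul Γ α hτ, hm, map_one]
  · refine eq_bot_iff.mpr fun a ha ↦ ?_
    obtain ⟨haA, haσ⟩ := Subgroup.mem_inf.mp ha
    rw [MonoidHom.mem_ker, hσ a haA] at haσ
    exact (pow_eq_one_iff_left hk).mp haσ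
  · -- `v ^ k = σ v * ((σ v)⁻¹ * v ^ k)`, and `σ` kills the second factor
    have := Subgroup.finiteIndex_range_powMonoidHom_of_fg V hk
    refine Subgroup.finiteIndex_of_le (H := (powMonoidHom k).range) ?_
    rintro _ ⟨v, rfl⟩
    rw [powMonoidHom_apply, ← mul_inv_cancel_left (σ v) (v ^ k)]
    refine Subgroup.mul_mem_sup (hσA v) ?_
    rw [MonoidHom.mem_ker, map_mul, map_inv, map_pow, hσ _ (hσA v), inv_mul_cancel]

variable (V)

theorem finite_torsion_of_fg : Finite (torsion V) := by
  have hfg : (torsion V).FG := by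
    rw [Subgroup.fg_iff_add_fg,
      ← AddSubgroup.toIntSubmodule_toAddSubgroup (torsion V).toAddSubgroup,
      ← Submodule.fg_iff_addSubgroup_fg]
    exact IsNoetherian.noetherian _
  have := (Group.fg_iff_subgroup_fg _).mpr hfg
  exact finite_of_fg_isMulTorsion _ fun a ↦ Submonoid.isOfFinOrder_coe.mp a.2

theorem exists_isMulTorsionFree_range_powMonoidHom :
    ∃ e : ℕ, e ≠ 0 ∧ IsMulTorsionFree (powMonoidHom e : V →* V).range := by
  have := finite_torsion_of_fg V
  refine ⟨Nat.card (torsion V), Nat.card_pos.ne',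
    isMulTorsionFree_iff_torsion_eq_bot.mpr (eq_bot_iff.mpr ?_)⟩
  rintro ⟨_, a, rfl⟩ ha
  have ha : IsOfFinOrder (a ^ Nat.card (torsion V)) := by
    simpa using (Subgroup.subtype _).isOfFinOrder ha
  have hpow := pow_card_eq_one' (G := torsion V) (x := ⟨a, ha.of_pow Nat.card_pos.ne'⟩)
  exact Subgroup.mem_bot.mpr (Subtype.ext (congrArg Subtype.val hpow :))

end CommGroup

theorem MulAut.finite_range_conjNormal {X : Type*} [Group X] {B : Subgroup X} [B.Normal]
    [B.FiniteIndex] [IsMulCommutative B] : Finite (MulAut.conjNormal : X →* MulAut B).range := by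
  have hB : B ≤ (MulAut.conjNormal : X →* MulAut B).ker := fun b hb ↦ by
    ext a
    simp [MulAut.conjNormal_apply, setLike_mul_comm hb a.2]
  have := Subgroup.finiteIndex_of_le hB
  exact Nat.finite_of_card_ne_zero
    ((Subgroup.index_ker (MulAut.conjNormal : X →* MulAut B)) ▸ Subgroup.FiniteIndex.index_ne_zero)

namespace VirtuallyAbelian

variable {X : Type*} [Group X] [Group.FG X]

open IsMulCommutative in
theorem exists_normal_isMulTorsionFree_s12 (hX : VirtuallyAbelian X) :
    ∃ B : Subgroup X, B.Normal ∧ B.FiniteIndex ∧ IsMulCommutative B ∧ IsMulTorsionFree B := by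
  obtain ⟨B₀, hB₀, hcomm⟩ := hX
  set C := B₀.normalCore
  have : IsMulCommutative C := isMulCommutative_iff.mpr fun a b ↦
    Subtype.ext (congrArg Subtype.val (hcomm ⟨a, B₀.normalCore_le a.2⟩ ⟨b, B₀.normalCore_le b.2⟩) :)
  obtain ⟨e, he, htf⟩ := CommGroup.exists_isMulTorsionFree_range_powMonoidHom C
  have := Subgroup.characteristic_range_powMonoidHom (A := C) e
  have := Subgroup.finiteIndex_range_powMonoidHom_of_fg C he
  let φ := Subgroup.equivMapOfInjective (powMonoidHom e).range C.subtype C.subtype_injective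
  refine ⟨(powMonoidHom e).range.map C.subtype, inferInstance,
    Subgroup.finiteIndex_map_subtype_s12 _, inferInstance, ?_⟩
  exact Function.Injective.isMulTorsionFree φ.symm.toMonoidHom φ.symm.injective

open IsMulCommutative in
theorem exists_complement_of_le_normalizer (hX : VirtuallyAbelian X) {P N : Subgroup X}
    (hPN : P ≤ Subgroup.normalizer N) :
    ∃ M : Subgroup X, P ≤ Subgroup.normalizer M ∧ N ⊓ M = ⊥ ∧ (N ⊔ M).FiniteIndex := by
  obtain ⟨B, hBn, hBfi, hBcomm, hBtf⟩ := hX.exists_normal_isMulTorsionFree_s12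
  let Γ := P.map (MulAut.conjNormal : X →* MulAut B)
  have : Finite Γ :=
    have := MulAut.finite_range_conjNormal (B := B)
    Finite.of_injective _ (Subgroup.inclusion_injective (Subgroup.map_le_range _ P))
  have hA : ∀ τ ∈ Γ, ∀ a ∈ N.subgroupOf B, τ a ∈ N.subgroupOf B := by
    rintro _ ⟨x, hx, rfl⟩ a ha
    rw [Subgroup.mem_subgroupOf, MulAut.conjNormal_apply]
    exact (hPN hx a).mp ha
  obtain ⟨M, hMΓ, hAM, hfi⟩ := CommGroup.exists_invariant_complement Γ hA
  refine ⟨M.map B.subtype, Subgroup.le_normalizer_of_conj_mem ?_, eq_bot_iff.mpr ?_, ?_⟩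
  · rintro x hx _ ⟨m, hm, rfl⟩
    exact ⟨_, hMΓ _ (Subgroup.mem_map_of_mem _ hx) m hm, MulAut.conjNormal_apply x m⟩
  · rintro _ ⟨hmN, m, hm, rfl⟩
    have : m ∈ N.subgroupOf B ⊓ M := ⟨hmN, hm⟩
    rw [hAM, Subgroup.mem_bot] at this
    simp [this]
  · have := Subgroup.finiteIndex_map_subtype_s12 (N.subgroupOf B ⊔ M)
    refine Subgroup.finiteIndex_of_le (H := (N.subgroupOf B ⊔ M).map B.subtype) ?_
    rw [Subgroup.map_sup, Subgroup.subgroupOf_map_subtype]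
    exact sup_le_sup_right inf_le_left _

end VirtuallyAbelian

/-- Proposition 5.8: the direct product of a finitely generated virtually abelian group with
a group satisfying (LR) satisfies (LR). -/
theorem LR_prod_of_fg_virtuallyAbelian {X Y : Type*} [Group X] [Group Y]
    (hXfg : Group.FG X) (hXva : VirtuallyAbelian X) (hY : LR Y) : LR (X × Y) := by
  intro H hH
  obtain ⟨R, hR, hR', _⟩ := isVirtualRetract_iff_s12.mp (hY _ (hH.map (MonoidHom.snd X Y)))
  obtain ⟨M, hM, hM', _⟩ :=
    hXva.exists_complement_of_le_normalizer (Subgroup.map_fst_le_normalizer_comap_inl H)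
  exact isVirtualRetract_of_prod_complement H hM hM' hR hR'
end

section
/- Let G be a group with property (VRC) which contains a torsion-free subgroup of finite index and which is not virtually abelian. Then the first virtual betti number of G is infinite: for every n ∈ ℕ there exists a finite-index subgroup K of G whose first betti number b₁(K) = dim_ℚ((K/[K,K]) ⊗_ℤ ℚ) is at least n. -/
/-!
Since `G` is not virtually abelian, every finite-index subgroup `K` contains a nontrivial
commutator `g` of elements of the torsion-free subgroup, so `g` has infinite order. By (VRC),
`⟨g⟩ ≅ ℤ` is a retract of some finite-index `K'`, giving a homomorphism `K' → ℤ` with `g ↦ 1`.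
On `L = K ∩ K'` the class of `g` in `H₁(L; ℚ)` is therefore nonzero, yet it dies in `H₁(K; ℚ)`
because `g` is a commutator in `K`. The map `H₁(L; ℚ) → H₁(K; ℚ)` is onto since `L` has finite
index in `K`, so `b₁(L) > b₁(K)`, and iterating makes the betti numbers unbounded.
-/

open scoped TensorProduct commutatorElement

/-- The rational first homology `H₁(H; ℚ)`, whose `ℚ`-rank is the first betti number. -/
abbrev RationalAbelianization (H : Type*) [Group H] : Type _ :=
  ℚ ⊗[ℤ] Additive (Abelianization H)

namespace RationalAbelianization

variable {H K : Type*} [Group H] [Group K]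

def of (x : H) : RationalAbelianization H :=
  (1 : ℚ) ⊗ₜ Additive.ofMul (Abelianization.of x)

noncomputable def map (f : H →* K) : RationalAbelianization H →ₗ[ℚ] RationalAbelianization K :=
  (Abelianization.map f).toAdditive.toIntLinearMap.baseChange ℚ

@[simp]
theorem map_of (f : H →* K) (x : H) : map f (of x) = of (f x) := by
  simp [map, of]

theorem of_commutatorElement (x y : H) : of ⁅x, y⁆ = 0 := by
  rw [of, map_commutatorElement, commutatorElement_eq_one_iff_mul_comm.mpr (mul_comm _ _),
    ofMul_one, TensorProduct.tmul_zero]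

theorem of_ne_zero_of_hom_ne_one (ψ : H →* Multiplicative ℤ) {x : H} (hx : ψ x ≠ 1) :
    of x ≠ 0 := by
  set evalψ : RationalAbelianization H →ₗ[ℚ] ℚ :=
    ((Int.castAddHom ℚ).comp (MonoidHom.toAdditiveLeft (Abelianization.lift ψ))).toIntLinearMap
      |>.liftBaseChange ℚ
  have hval : evalψ (of x) = ((Multiplicative.toAdd (ψ x) : ℤ) : ℚ) := by
    simp [evalψ, of]
  intro h0
  rw [h0, map_zero, eq_comm, Int.cast_eq_zero] at hval
  exact hx (toAdd_eq_zero.mp hval)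

/-- Every element has a positive power in the image, and positive integers are invertible in `ℚ`. -/
theorem map_surjective (f : H →* K) [f.range.FiniteIndex] : Function.Surjective (map f) := by
  rw [← LinearMap.range_eq_top, eq_top_iff]
  rintro z -
  induction z using TensorProduct.induction_on with
  | zero => exact zero_mem _
  | add z w hz hw => exact add_mem hz hw
  | tmul q m =>
    obtain ⟨k, hk⟩ : ∃ k, Abelianization.of k = m.toMul := QuotientGroup.mk_surjective _
    rw [← ofMul_toMul m, ← hk]
    obtain ⟨j, hj, -, x, hx⟩ :=
      Subgroup.exists_pow_mem_of_index_ne_zero (Subgroup.FiniteIndex.index_ne_zero (H := f.range)) k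
    have hq : q ⊗ₜ[ℤ] Additive.ofMul (Abelianization.of k) = (q / j) • map f (of x) := by
      rw [map_of, hx, of, map_pow, ofMul_pow, TensorProduct.tmul_smul, TensorProduct.smul_tmul',
        nsmul_eq_mul, mul_one, TensorProduct.smul_tmul', smul_eq_mul,
        div_mul_cancel₀ _ (by exact_mod_cast hj.ne')]
    rw [hq]
    exact Submodule.smul_mem _ _ (LinearMap.mem_range_self _ _)

end RationalAbelianization

universe u

theorem LinearMap.rank_add_one_le_of_surjective {K : Type*} {V W : Type u} [DivisionRing K]
    [AddCommGroup V] [Module K V] [AddCommGroup W] [Module K W] {f : V →ₗ[K] W}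
    (hf : Function.Surjective f) {x : V} (hx : f x = 0) (hx0 : x ≠ 0) :
    Module.rank K W + 1 ≤ Module.rank K V := by
  have hker : 1 ≤ Module.rank K (LinearMap.ker f) :=
    Cardinal.one_le_iff_ne_zero.mpr
      (rank_pos_iff_exists_ne_zero.mpr ⟨⟨x, hx⟩, fun h => hx0 (congrArg Subtype.val h)⟩).ne'
  rw [LinearMap.rank_eq_of_surjective hf]
  gcongr

section VRC

variable {G : Type*} [Group G]

theorem exists_commutatorElement_ne_one_of_not_virtuallyAbelian (hG : ¬ VirtuallyAbelian G)
    (K : Subgroup G) [K.FiniteIndex] : ∃ a ∈ K, ∃ b ∈ K, ⁅a, b⁆ ≠ 1 := by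
  by_contra! hK
  exact hG ⟨K, inferInstance, fun x y =>
    Subtype.ext (commutatorElement_eq_one_iff_mul_comm.mp (hK x x.2 y y.2))⟩

/-- Composing the retraction with `⟨g⟩ ≅ ℤ` gives a homomorphism to `ℤ` not killing `g`. -/
theorem IsVirtualRetract.exists_hom_int_ne_one {g : G} (h : IsVirtualRetract (Subgroup.zpowers g))
    (hg : ¬ IsOfFinOrder g) :
    ∃ K : Subgroup G, K.FiniteIndex ∧
      ∃ (hgK : g ∈ K) (ψ : K →* Multiplicative ℤ), ψ ⟨g, hgK⟩ ≠ 1 := by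
  obtain ⟨K, hle, hK, ρ, hρ, hρg⟩ := h
  have hinj : Function.Injective (zpowersHom G g) :=
    (injective_zpow_iff_not_isOfFinOrder.mpr hg).comp Multiplicative.toAdd.injective
  let e : Multiplicative ℤ ≃* Subgroup.zpowers g := MonoidHom.ofInjective hinj
  refine ⟨K, hK, hle (Subgroup.mem_zpowers g),
    e.symm.toMonoidHom.comp (ρ.codRestrict _ hρ), ?_⟩
  have hg1 : g ≠ 1 := fun h1 => hg (h1 ▸ IsOfFinOrder.one)
  simpa [hρg g (Subgroup.mem_zpowers g)] using hg1

theorem exists_finiteIndex_rank_add_one_le (hVRC : VRC G)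
    (htf : ∃ T : Subgroup G, T.FiniteIndex ∧ ∀ g ∈ T, IsOfFinOrder g → g = 1)
    (hnva : ¬ VirtuallyAbelian G) (K : Subgroup G) [K.FiniteIndex] :
    ∃ L : Subgroup G, L.FiniteIndex ∧
      Module.rank ℚ (RationalAbelianization K) + 1 ≤ Module.rank ℚ (RationalAbelianization L) := by
  obtain ⟨T, hT, htf⟩ := htf
  obtain ⟨a, ⟨haK, haT⟩, b, ⟨hbK, hbT⟩, hab⟩ :=
    exists_commutatorElement_ne_one_of_not_virtuallyAbelian hnva (K ⊓ T)
  have hgK : ⁅a, b⁆ ∈ K := K.commutator_le_self (Subgroup.commutator_mem_commutator haK hbK)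
  have hgT : ⁅a, b⁆ ∈ T := T.commutator_le_self (Subgroup.commutator_mem_commutator haT hbT)
  have hg : ¬ IsOfFinOrder ⁅a, b⁆ := fun h => hab (htf _ hgT h)
  obtain ⟨K', hK', hgK', ψ, hψ⟩ := (hVRC ⁅a, b⁆).exists_hom_int_ne_one hg
  refine ⟨K ⊓ K', inferInstance, ?_⟩
  have : (Subgroup.inclusion (inf_le_left : K ⊓ K' ≤ K)).range.FiniteIndex := by
    rw [Subgroup.inclusion_range]
    infer_instance
  refine LinearMap.rank_add_one_le_of_surjective
    (RationalAbelianization.map_surjective (Subgroup.inclusion inf_le_left))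
    (x := RationalAbelianization.of (⟨⁅a, b⁆, hgK, hgK'⟩ : ↥(K ⊓ K'))) ?_
    (RationalAbelianization.of_ne_zero_of_hom_ne_one (ψ.comp (Subgroup.inclusion inf_le_right)) hψ)
  rw [RationalAbelianization.map_of]
  exact RationalAbelianization.of_commutatorElement (⟨a, haK⟩ : K) ⟨b, hbK⟩

end VRC

/-- Proposition 5.11: a virtually torsion-free group with (VRC) which is not virtually abelian
has infinite first virtual betti number. -/
theorem infinite_virtual_betti_number_of_VRC {G : Type*} [Group G] (hVRC : VRC G)
    (htf : ∃ T : Subgroup G, T.FiniteIndex ∧ ∀ g ∈ T, IsOfFinOrder g → g = 1)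
    (hnva : ¬ VirtuallyAbelian G) :
    ∀ n : ℕ, ∃ K : Subgroup G, K.FiniteIndex ∧
      (n : Cardinal) ≤ Module.rank ℚ (ℚ ⊗[ℤ] Additive (Abelianization ↥K)) := by
  intro n
  induction n with
  | zero => exact ⟨⊤, inferInstance, by simp⟩
  | succ n ih =>
    obtain ⟨K, hK, hn⟩ := ih
    obtain ⟨L, hL, hKL⟩ := exists_finiteIndex_rank_add_one_le hVRC htf hnva K
    exact ⟨L, hL, by push_cast; exact le_trans (by gcongr) hKL⟩
end

section
/- Let G be a group and let g ∈ G be an element of infinite order such that the cyclic subgroup ⟨g⟩ is a virtual retract of G. Then g is quasi-potent in G: there exists n ∈ ℕ, n ≥ 1, such that for every k ∈ ℕ, k ≥ 1, there exist a finite group M and a homomorphism ψ : G → M such that the order of ψ(g) in M is exactly kn. -/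
/-!
Let `ρ : K → ⟨g⟩` be the retraction, `N` the normal core of `K` and `m` the order of `g` modulo
`N`. Read through `⟨g⟩ ≅ ℤ`, `ρ` restricts to a character `φ : N → ℤ` with `φ (g ^ m) = m ≠ 0`.
Let `e` generate the ideal of `ℤ` spanned by the values `φ (x g^m x⁻¹)`, `x ∈ G`. Modulo the
normal core of `{y ∈ N | k e ∣ φ y}`, a finite-index normal subgroup, `g ^ i` is trivial iff
`m ∣ i` and `k e` divides every `(i / m) φ (x g^m x⁻¹)`, that is `k e ∣ (i / m) e`; so `g` has
order exactly `k m`.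
-/

open Subgroup

lemma Int.exists_forall_dvd_mul_iff {ι : Type*} (t : ι → ℤ) :
    ∃ e : ℤ, ∀ d i : ℤ, (∀ x, d ∣ i * t x) ↔ d ∣ i * e := by
  obtain ⟨e, he⟩ := IsPrincipalIdealRing.principal (Ideal.span (Set.range t))
  refine ⟨e, fun d i => ?_⟩
  have mem_colon : ∀ a, a ∈ (Ideal.span {d}).colon {i} ↔ d ∣ i * a := by
    simp [Ideal.mem_span_singleton, mul_comm]
  calc (∀ x, d ∣ i * t x) ↔ Set.range t ⊆ (Ideal.span {d}).colon {i} := by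
        simp only [Set.range_subset_iff, SetLike.mem_coe, mem_colon]
    _ ↔ Ideal.span (Set.range t) ≤ (Ideal.span {d}).colon {i} := Ideal.span_le.symm
    _ ↔ d ∣ i * e := by
        rw [he, Submodule.span_singleton_le_iff_mem, mem_colon]

section

variable {G : Type*} [Group G]

lemma exists_zpowersHom_comp_eq {g : G} (hg : ¬IsOfFinOrder g) {K : Type*} [Group K]
    (ρ : K →* G) (hρ : ∀ k, ρ k ∈ zpowers g) :
    ∃ φ : K →* Multiplicative ℤ, (zpowersHom G g).comp φ = ρ := by
  have hinj : Function.Injective (zpowersHom G g) :=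
    (injective_zpow_iff_not_isOfFinOrder.mpr hg).comp Multiplicative.toAdd.injective
  exact ⟨(MonoidHom.ofInjective hinj).symm.toMonoidHom.comp (ρ.codRestrict _ hρ),
    MonoidHom.ext fun k => congrArg Subtype.val ((MonoidHom.ofInjective hinj).apply_symm_apply _)⟩

lemma orderOf_mk_eq_mul_orderOf_mk_pow {C N : Subgroup G} [C.Normal] [N.Normal] (hCN : C ≤ N)
    (g : G) : orderOf (g : G ⧸ C) =
      orderOf (g : G ⧸ N) * orderOf ((g ^ orderOf (g : G ⧸ N) : G) : G ⧸ C) := by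
  set m := orderOf (g : G ⧸ N)
  have hm : m ∣ orderOf (g : G ⧸ C) :=
    orderOf_map_dvd (QuotientGroup.map C N (MonoidHom.id G) hCN) (g : G ⧸ C)
  rcases eq_or_ne m 0 with hm0 | hm0
  · rw [hm0, zero_mul, ← zero_dvd_iff, ← hm0]
    exact hm
  · rw [QuotientGroup.mk_pow, orderOf_pow_of_dvd hm0 hm, Nat.mul_div_cancel' hm]

lemma exists_monoidHom_type_orderOf_eq {Q : Type*} [Group Q] [Finite Q] (ψ : G →* Q) (g : G) :
    ∃ (M : Type) (_ : Group M) (_ : Finite M) (ψ' : G →* M), orderOf (ψ' g) = orderOf (ψ g) := by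
  obtain ⟨M, _, _, ⟨e⟩⟩ := Finite.exists_type_univ_nonempty_mulEquiv.{_, 0} Q
  exact ⟨M, _, inferInstance, e.toMonoidHom.comp ψ, e.orderOf_eq _⟩

lemma exists_finiteIndex_le_forall_coe_mem_iff_dvd {N : Subgroup G} [N.FiniteIndex]
    (φ : N →* Multiplicative ℤ) {d : ℕ} (hd : d ≠ 0) :
    ∃ L : Subgroup G, L.FiniteIndex ∧ L ≤ N ∧ ∀ y : N, (y : G) ∈ L ↔ (d : ℤ) ∣ (φ y).toAdd := by
  have : NeZero d := ⟨hd⟩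
  refine ⟨((Int.castAddHom (ZMod d)).toMultiplicative.comp φ).ker.map N.subtype, ⟨?_⟩,
    map_subtype_le _, fun y => ?_⟩
  · rw [index_map_subtype]
    exact mul_ne_zero FiniteIndex.index_ne_zero FiniteIndex.index_ne_zero
  · rw [← ZMod.intCast_zmod_eq_zero_iff_dvd, ← N.coe_subtype, mem_map_iff_mem N.subtype_injective]
    simp

lemma exists_normal_finiteIndex_orderOf_mk_eq {N : Subgroup G} [N.Normal] [N.FiniteIndex]
    (φ : N →* Multiplicative ℤ) {h : N} (hφ : φ h ≠ 1) {k : ℕ} (hk : k ≠ 0) :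
    ∃ (C : Subgroup G) (_ : C.Normal), C.FiniteIndex ∧ C ≤ N ∧ orderOf ((h : G) : G ⧸ C) = k := by
  set t : G → ℤ := fun x => (φ (MulAut.conjNormal x h)).toAdd
  obtain ⟨e, he⟩ := Int.exists_forall_dvd_mul_iff t
  have he0 : e ≠ 0 := by
    rintro rfl
    have : (0 : ℤ) ∣ t 1 := by simpa using (he 0 1).2 (dvd_refl 0) 1
    exact hφ (by simpa [t] using this)
  obtain ⟨L, _, hLN, mem_L⟩ := exists_finiteIndex_le_forall_coe_mem_iff_dvd φ
    (mul_ne_zero hk (Int.natAbs_ne_zero.mpr he0))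
  refine ⟨L.normalCore, inferInstance, inferInstance, L.normalCore_le.trans hLN,
    eq_of_forall_dvd fun i => ?_⟩
  have conj_mem_L (x : G) : x * (h : G) ^ i * x⁻¹ ∈ L ↔ ((k * e.natAbs : ℕ) : ℤ) ∣ i * t x := by
    rw [← SubgroupClass.coe_pow, ← MulAut.conjNormal_apply, mem_L]
    simp [t]
  rw [orderOf_dvd_iff_pow_eq_one, ← QuotientGroup.mk_pow, QuotientGroup.eq_one_iff]
  change (∀ x : G, x * (h : G) ^ i * x⁻¹ ∈ L) ↔ _
  simp only [conj_mem_L]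
  rw [he, Int.natCast_dvd, Int.natAbs_mul, Int.natAbs_natCast,
    Nat.mul_dvd_mul_iff_right (Int.natAbs_pos.mpr he0)]

end

/-- Lemma 8.2: if `g ∈ G` has infinite order and `⟨g⟩ ≤vr G`, then `g` is quasi-potent:
there is `n ≥ 1` such that for every `k ≥ 1` some homomorphism to a finite group sends `g`
to an element of order exactly `k * n`. -/
theorem quasiPotent_of_virtualRetract_zpowers {G : Type*} [Group G] (g : G)
    (hg : ¬ IsOfFinOrder g) (hvr : IsVirtualRetract (Subgroup.zpowers g)) :
    ∃ n : ℕ, 1 ≤ n ∧ ∀ k : ℕ, 1 ≤ k →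
      ∃ (M : Type) (_ : Group M) (_ : Finite M) (ψ : G →* M),
        orderOf (ψ g) = k * n := by
  obtain ⟨K, _, hK, ρ, hρ, hρ_id⟩ := hvr
  obtain ⟨φ, hφ⟩ := exists_zpowersHom_comp_eq hg ρ hρ
  set N := K.normalCore
  set m := orderOf (g : G ⧸ N)
  have hm : 0 < m := orderOf_pos _
  have hgmN : g ^ m ∈ N := by
    rw [← QuotientGroup.eq_one_iff, QuotientGroup.mk_pow, pow_orderOf_eq_one]
  have hφgm : φ.comp (inclusion K.normalCore_le) ⟨g ^ m, hgmN⟩ ≠ 1 := by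
    intro h1
    have : g ^ m = 1 := by
      rw [← hρ_id _ (pow_mem (mem_zpowers g) m), ← hφ, MonoidHom.comp_apply]
      exact (congrArg (zpowersHom G g) h1).trans (map_one _)
    exact hg (isOfFinOrder_iff_pow_eq_one.mpr ⟨m, hm, this⟩)
  refine ⟨m, hm, fun k hk => ?_⟩
  obtain ⟨C, _, _, hCN, hC⟩ :=
    exists_normal_finiteIndex_orderOf_mk_eq _ hφgm (Nat.one_le_iff_ne_zero.mp hk)
  obtain ⟨M, _, _, ψ, hψ⟩ := exists_monoidHom_type_orderOf_eq (QuotientGroup.mk' C) g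
  refine ⟨M, _, ‹_›, ψ, ?_⟩
  rw [hψ, QuotientGroup.mk'_apply, orderOf_mk_eq_mul_orderOf_mk_pow hCN, hC, mul_comm]
end
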